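/- arXiv:2602.04324 — 7 statements merged into one kernel-verified Lean document; each statement's English description precedes it below -/
import Mathlib

section
/- Let r ≥ 1 and let H = H(A ∪ B, A → B) be a bipartite digraph on h vertices, all of whose arcs are directed from A to B, such that every vertex a ∈ A has at most r out-neighbours in B. Then there exists a constant c = c(H) > 0 such that for every n, the oriented Turán number satisfies exo(n, H) ≤ c · n^{2 - 1/r}. -/
/-- An oriented graph `G` contains a copy of the oriented graph `F`: there is an injective
map sending every arc of `F` to an arc of `G`. -/
def Copies {α β : Type*} (F : α → α → Prop) (G : β → β → Prop) : Prop :=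
  ∃ f : α → β, Function.Injective f ∧ ∀ a b, F a b → G (f a) (f b)

/-- The oriented Turán number: the maximum number of arcs in an `F`-free oriented graph
(irreflexive, asymmetric relation) on `n` vertices. -/
noncomputable def exo {α : Type*} (n : ℕ) (F : α → α → Prop) : ℕ :=
  sSup {m : ℕ | ∃ G : Fin n → Fin n → Prop,
    (∀ v, ¬ G v v) ∧ (∀ u v, G u v → ¬ G v u) ∧
    ¬ Copies F G ∧ {p : Fin n × Fin n | G p.1 p.2}.ncard = m}


open Finset


section Aux

variable {n : ℕ} (G : Fin n → Fin n → Prop) [DecidableRel G]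

/-- common in-neighbourhood of a finite set of vertices -/
def comN (S : Finset (Fin n)) : Finset (Fin n) := univ.filter (fun v => ∀ u ∈ S, G v u)

/-- common out-neighbourhood of a tuple -/
def UxF (r : ℕ) (x : Fin r → Fin n) : Finset (Fin n) := univ.filter (fun u => ∀ i, G (x i) u)

lemma card_tuples (r : ℕ) (D : Finset (Fin n)) :
    (univ.filter (fun x : Fin r → Fin n => ∀ i, x i ∈ D)).card = D.card ^ r := by
  have h : (univ.filter (fun x : Fin r → Fin n => ∀ i, x i ∈ D))
      = Fintype.piFinset (fun _ : Fin r => D) := by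
    ext x; simp [Fintype.mem_piFinset]
  rw [h, Fintype.card_piFinset]
  simp

lemma sum_card_Ux (r : ℕ) :
    ∑ x : Fin r → Fin n, (UxF G r x).card
      = ∑ u : Fin n, (univ.filter (fun v => G v u)).card ^ r := by
  calc ∑ x : Fin r → Fin n, (UxF G r x).card
      = ∑ x : Fin r → Fin n, ∑ u : Fin n, if (∀ i, G (x i) u) then 1 else 0 := by
        refine Finset.sum_congr rfl fun x _ => ?_
        rw [UxF, Finset.card_filter]
    _ = ∑ u : Fin n, ∑ x : Fin r → Fin n, if (∀ i, G (x i) u) then 1 else 0 := Finset.sum_comm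
    _ = ∑ u : Fin n, (univ.filter (fun x : Fin r → Fin n => ∀ i, x i ∈ univ.filter (fun v => G v u))).card := by
        refine Finset.sum_congr rfl fun u _ => ?_
        rw [Finset.card_filter]
        refine Finset.sum_congr rfl fun x _ => ?_
        simp
    _ = _ := by
        refine Finset.sum_congr rfl fun u _ => ?_
        rw [card_tuples]

lemma sum_card_bad (r : ℕ) (Bs : Finset (Finset (Fin n))) :
    ∑ x : Fin r → Fin n, (Bs.filter (fun S => S ⊆ UxF G r x)).card
      = ∑ S ∈ Bs, (comN G S).card ^ r := by
  have key : ∀ (S : Finset (Fin n)) (x : Fin r → Fin n),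
      S ⊆ UxF G r x ↔ ∀ i, x i ∈ comN G S := by
    intro S x
    constructor
    · intro hs i
      simp only [comN, mem_filter, mem_univ, true_and]
      intro u hu
      have := hs hu
      simp only [UxF, mem_filter, mem_univ, true_and] at this
      exact this i
    · intro hx u hu
      simp only [UxF, mem_filter, mem_univ, true_and]
      intro i
      have := hx i
      simp only [comN, mem_filter, mem_univ, true_and] at this
      exact this u hu
  calc ∑ x : Fin r → Fin n, (Bs.filter (fun S => S ⊆ UxF G r x)).card
      = ∑ x : Fin r → Fin n, ∑ S ∈ Bs, if S ⊆ UxF G r x then 1 else 0 := by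
        refine Finset.sum_congr rfl fun x _ => ?_
        rw [Finset.card_filter]
    _ = ∑ S ∈ Bs, ∑ x : Fin r → Fin n, if S ⊆ UxF G r x then 1 else 0 := Finset.sum_comm
    _ = ∑ S ∈ Bs, (univ.filter (fun x : Fin r → Fin n => ∀ i, x i ∈ comN G S)).card := by
        refine Finset.sum_congr rfl fun S _ => ?_
        rw [Finset.card_filter]
        refine Finset.sum_congr rfl fun x _ => ?_
        simp only [key]
    _ = _ := by
        refine Finset.sum_congr rfl fun S _ => ?_
        rw [card_tuples]

lemma sum_indeg :
    ∑ u : Fin n, (univ.filter (fun v => G v u)).card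
      = (univ.filter (fun p : Fin n × Fin n => G p.1 p.2)).card := by
  rw [Finset.card_eq_sum_card_fiberwise
    (f := fun p : Fin n × Fin n => p.2) (t := univ) (fun p _ => mem_univ _)]
  refine Finset.sum_congr rfl fun u _ => ?_
  refine Finset.card_bij (fun v _ => (v, u)) ?_ ?_ ?_
  · intro v hv
    simp only [mem_filter, mem_univ, true_and] at hv ⊢
    exact ⟨hv, trivial⟩
  · intro v1 h1 v2 h2 hEq
    exact congrArg Prod.fst hEq
  · intro p hp
    simp only [mem_filter, mem_univ, true_and] at hp
    refine ⟨p.1, ?_, ?_⟩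
    · simp only [mem_filter, mem_univ, true_and]
      exact hp.2 ▸ hp.1
    · exact Prod.ext rfl hp.2.symm

end Aux

lemma embed_lemma {V : Type*} [Fintype V] [Nonempty V] {n r : ℕ}
    (A B : Set V) (hcover : ∀ v, v ∈ A ∨ v ∈ B) (hdisj : A ∩ B = ∅)
    (H : V → V → Prop) (harcs : ∀ u v, H u v → u ∈ A ∧ v ∈ B)
    (hdeg : ∀ a ∈ A, {b ∈ B | H a b}.ncard ≤ r)
    (G : Fin n → Fin n → Prop) [DecidableRel G]
    (U' : Finset (Fin n)) (hcard : Fintype.card V ≤ U'.card)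
    (hgood : ∀ S ⊆ U', S.Nonempty → S.card ≤ r → Fintype.card V ≤ (comN G S).card) :
    Copies H G := by
  classical
  set h := Fintype.card V with hh
  have h1 : 1 ≤ h := Fintype.card_pos
  -- B and A as finsets
  set Bf : Finset V := B.toFinset with hBf
  set Af : Finset V := A.toFinset with hAf
  have hBfcard : Bf.card ≤ h := Finset.card_le_univ Bf
  -- an injection of Bf into U'
  obtain ⟨emb⟩ : Nonempty (↥Bf ↪ ↥U') := by
    apply Function.Embedding.nonempty_of_card_le
    rw [Fintype.card_coe, Fintype.card_coe]
    exact le_trans hBfcard hcard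
  have hU'ne : U'.Nonempty := Finset.card_pos.mp (lt_of_lt_of_le h1 hcard)
  obtain ⟨junk, hjunk⟩ := hU'ne
  set g : V → Fin n := fun v => if hv : v ∈ Bf then (emb ⟨v, hv⟩ : Fin n) else junk with hg
  have hgmem : ∀ v ∈ Bf, g v ∈ U' := by
    intro v hv
    rw [hg]; simp only [hv, dif_pos]
    exact (emb ⟨v, hv⟩).2
  have hginj : Set.InjOn g ↑Bf := by
    intro x hx y hy hxy
    simp only [Finset.mem_coe] at hx hy
    rw [hg] at hxy
    simp only [hx, hy, dif_pos] at hxy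
    have := emb.injective (Subtype.coe_injective hxy)
    exact congrArg Subtype.val this
  -- sequential embedding of A
  have key : ∀ (A' : Finset V), ↑A' ⊆ A → ∀ used : Finset (Fin n),
      Bf.image g ⊆ used → used.card + A'.card ≤ h →
      ∃ f : V → Fin n, (Set.InjOn f ↑A') ∧ (∀ a ∈ A', f a ∉ used) ∧
        (∀ a ∈ A', ∀ b, H a b → G (f a) (g b)) := by
    intro A'
    induction A' using Finset.induction_on with
    | empty =>
      intro _ used _ _
      exact ⟨fun _ => junk, by simp, by simp, by simp⟩
    | @insert a A'' ha IH =>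
      intro hsub used hused hcards
      have hsub'' : ↑A'' ⊆ A := by
        intro x hx; exact hsub (by simp [hx])
      have hcards'' : used.card + A''.card ≤ h := by
        rw [Finset.card_insert_of_notMem ha] at hcards; omega
      obtain ⟨f, hinj, hnot, harc⟩ := IH hsub'' used hused hcards''
      have haA : a ∈ A := hsub (by simp)
      -- the out-neighbourhood of a in H
      set Na : Finset V := univ.filter (fun b => H a b) with hNa
      have hNaB : ↑Na ⊆ B := by
        intro b hb
        simp only [hNa, Finset.coe_filter, Set.mem_setOf_eq, mem_univ, true_and] at hb
        exact (harcs a b hb).2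
      have hNacard : Na.card ≤ r := by
        have : {b ∈ B | H a b} = ↑Na := by
          ext b
          simp only [hNa, Finset.coe_filter, Set.mem_setOf_eq, mem_univ, true_and]
          exact ⟨fun hb => hb.2, fun hb => ⟨(harcs a b hb).2, hb⟩⟩
        have h2 := hdeg a haA
        rw [this, Set.ncard_coe_finset] at h2
        exact h2
      set S : Finset (Fin n) := Na.image g with hS
      have hSU : S ⊆ U' := by
        intro v hv
        simp only [hS, Finset.mem_image] at hv
        obtain ⟨b, hb, rfl⟩ := hv
        exact hgmem b (by rw [hBf, Set.mem_toFinset]; exact hNaB hb)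
      have hScard : S.card ≤ r := le_trans Finset.card_image_le hNacard
      set forb : Finset (Fin n) := used ∪ A''.image f with hforb
      have hforbcard : forb.card < h := by
        calc forb.card ≤ used.card + (A''.image f).card := Finset.card_union_le _ _
          _ ≤ used.card + A''.card := by
              have := Finset.card_image_le (s := A'') (f := f); omega
          _ < h := by
              rw [Finset.card_insert_of_notMem ha] at hcards; omega
      -- choose the image of a
      have hv : ∃ v : Fin n, v ∉ forb ∧ ∀ u ∈ S, G v u := by
        rcases S.eq_empty_or_nonempty with hSe | hSne
        · have : (univ \ forb).Nonempty := by
            apply Finset.card_pos.mp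
            have h2 : forb.card < (univ : Finset (Fin n)).card := by
              have : U'.card ≤ (univ : Finset (Fin n)).card := Finset.card_le_univ _
              omega
            have := Finset.le_card_sdiff forb (univ : Finset (Fin n))
            omega
          obtain ⟨v, hv⟩ := this
          rw [Finset.mem_sdiff] at hv
          exact ⟨v, hv.2, by simp [hSe]⟩
        · have hT : h ≤ (comN G S).card := hgood S hSU hSne hScard
          have : (comN G S \ forb).Nonempty := by
            apply Finset.card_pos.mp
            have := Finset.le_card_sdiff forb (comN G S)
            omega
          obtain ⟨v, hv⟩ := this
          rw [Finset.mem_sdiff] at hv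
          refine ⟨v, hv.2, ?_⟩
          have := hv.1
          simp only [comN, mem_filter, mem_univ, true_and] at this
          exact this
      obtain ⟨v, hvforb, hvS⟩ := hv
      refine ⟨Function.update f a v, ?_, ?_, ?_⟩
      · -- injectivity on insert a A''
        intro x hx y hy hxy
        simp only [Finset.coe_insert, Set.mem_insert_iff, Finset.mem_coe] at hx hy
        rcases hx with rfl | hx <;> rcases hy with rfl | hy
        · rfl
        · exfalso
          rw [Function.update_self, Function.update_of_ne (by rintro rfl; exact ha hy)] at hxy
          apply hvforb
          rw [hforb, Finset.mem_union]
          right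
          rw [hxy]
          exact Finset.mem_image_of_mem f hy
        · exfalso
          rw [Function.update_self, Function.update_of_ne (by rintro rfl; exact ha hx)] at hxy
          apply hvforb
          rw [hforb, Finset.mem_union]
          right
          rw [← hxy]
          exact Finset.mem_image_of_mem f hx
        · rw [Function.update_of_ne (by rintro rfl; exact ha hx),
            Function.update_of_ne (by rintro rfl; exact ha hy)] at hxy
          exact hinj (by simpa using hx) (by simpa using hy) hxy
      · intro a' ha'
        rcases Finset.mem_insert.mp ha' with rfl | ha''
        · rw [Function.update_self]
          intro hmem
          exact hvforb (by rw [hforb, Finset.mem_union]; exact Or.inl hmem)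
        · rw [Function.update_of_ne (by rintro rfl; exact ha ha'')]
          exact hnot a' ha''
      · intro a' ha' b hb
        rcases Finset.mem_insert.mp ha' with rfl | ha''
        · rw [Function.update_self]
          apply hvS
          rw [hS]
          exact Finset.mem_image_of_mem g (by simp [hNa, hb])
        · rw [Function.update_of_ne (by rintro rfl; exact ha ha'')]
          exact harc a' ha'' b hb
  -- apply key to all of A
  have hAB : Af.card + Bf.card = h := by
    rw [hh, ← Finset.card_univ, ← Finset.card_union_of_disjoint]
    · congr 1
      ext v
      simp only [Finset.mem_union, hAf, hBf, Set.mem_toFinset, Finset.mem_univ, iff_true]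
      exact hcover v
    · rw [Finset.disjoint_left]
      intro x hx1 hx2
      rw [hAf, Set.mem_toFinset] at hx1
      rw [hBf, Set.mem_toFinset] at hx2
      have : x ∈ A ∩ B := ⟨hx1, hx2⟩
      rw [hdisj] at this
      exact this
  have himgcard : (Bf.image g).card = Bf.card := Finset.card_image_of_injOn hginj
  obtain ⟨f, hinj, hnot, harc⟩ := key Af (by rw [hAf, Set.coe_toFinset])
    (Bf.image g) (le_refl _) (by omega)
  -- combine
  refine ⟨fun v => if v ∈ Af then f v else g v, ?_, ?_⟩
  · intro x y hxy
    by_cases hx : x ∈ Af <;> by_cases hy : y ∈ Af <;> simp only [hx, hy, if_pos, if_neg,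
      if_true, if_false] at hxy
    · exact hinj (by simpa using hx) (by simpa using hy) hxy
    · exfalso
      have hyB : y ∈ Bf := by
        rw [hBf, Set.mem_toFinset]
        rcases hcover y with hyA | hyB
        · exact absurd (by rw [hAf, Set.mem_toFinset]; exact hyA) hy
        · exact hyB
      exact hnot x hx (hxy ▸ Finset.mem_image_of_mem g hyB)
    · exfalso
      have hxB : x ∈ Bf := by
        rw [hBf, Set.mem_toFinset]
        rcases hcover x with hxA | hxB
        · exact absurd (by rw [hAf, Set.mem_toFinset]; exact hxA) hx
        · exact hxB
      exact hnot y hy (hxy ▸ Finset.mem_image_of_mem g hxB)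
    · have hxB : x ∈ Bf := by
        rw [hBf, Set.mem_toFinset]
        rcases hcover x with hxA | hxB
        · exact absurd (by rw [hAf, Set.mem_toFinset]; exact hxA) hx
        · exact hxB
      have hyB : y ∈ Bf := by
        rw [hBf, Set.mem_toFinset]
        rcases hcover y with hyA | hyB
        · exact absurd (by rw [hAf, Set.mem_toFinset]; exact hyA) hy
        · exact hyB
      exact hginj (Finset.mem_coe.mpr hxB) (Finset.mem_coe.mpr hyB) hxy
  · intro u v huv
    have huA : u ∈ A := (harcs u v huv).1
    have hvB : v ∈ B := (harcs u v huv).2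
    have huAf : u ∈ Af := by rw [hAf, Set.mem_toFinset]; exact huA
    have hvAf : v ∉ Af := by
      rw [hAf, Set.mem_toFinset]
      intro hvA
      have : v ∈ A ∩ B := ⟨hvA, hvB⟩
      rw [hdisj] at this
      exact this
    simp only [huAf, hvAf, if_true, if_false, if_pos, if_neg, not_false_iff]
    exact harc u huAf v huv

/-- Main extraction: a dense oriented graph has a large vertex set all of whose small subsets
have large common in-neighbourhood. -/
lemma exists_good_set {n r h : ℕ} (hr : 1 ≤ r) (h1 : 1 ≤ h) (hn : h ≤ n)
    (G : Fin n → Fin n → Prop) [DecidableRel G]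
    (he : ((h + (r+1) * h^r + 1 : ℕ) : ℝ) * (n : ℝ) ^ ((2:ℝ) - 1/(r:ℝ))
      ≤ ((univ.filter (fun p : Fin n × Fin n => G p.1 p.2)).card : ℝ)) :
    ∃ U' : Finset (Fin n), h ≤ U'.card ∧
      ∀ S ⊆ U', S.Nonempty → S.card ≤ r → h ≤ (comN G S).card := by
  classical
  have hn1 : 1 ≤ n := le_trans h1 hn
  have hn0 : (0:ℝ) < (n:ℝ) := by exact_mod_cast hn1
  set c : ℕ := h + (r+1) * h^r + 1 with hc
  set e : ℕ := (univ.filter (fun p : Fin n × Fin n => G p.1 p.2)).card with hedef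
  clear_value c e
  -- Step 1 : rpow arithmetic
  have hδr : ((n:ℝ) ^ ((2:ℝ) - 1/(r:ℝ))) ^ r = (n:ℝ) ^ (2*r - 1) := by
    have hrR : (r:ℝ) ≠ 0 := by positivity
    rw [← Real.rpow_natCast ((n:ℝ) ^ ((2:ℝ) - 1/(r:ℝ))) r, ← Real.rpow_mul (le_of_lt hn0)]
    rw [show ((2:ℝ) - 1/(r:ℝ)) * (r:ℕ) = ((2*r - 1 : ℕ) : ℝ) by
      push_cast [Nat.cast_sub (by omega : 1 ≤ 2*r)]
      field_simp]
    exact Real.rpow_natCast _ _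
  have hek : ((c:ℕ):ℝ)^r * (n:ℝ)^(2*r-1) ≤ (e:ℝ)^r := by
    calc ((c:ℕ):ℝ)^r * (n:ℝ)^(2*r-1) = (((c:ℕ):ℝ) * (n:ℝ) ^ ((2:ℝ) - 1/(r:ℝ)))^r := by
          rw [mul_pow, hδr]
      _ ≤ (e:ℝ)^r := by
          apply pow_le_pow_left₀ (by positivity) he
  -- Step 2 : power mean
  have hpow := pow_sum_div_card_le_sum_pow (s := (univ : Finset (Fin n)))
    (f := fun u => ((univ.filter (fun v => G v u)).card : ℝ)) (fun i _ => by positivity) (r-1)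
  rw [Nat.sub_add_cancel hr, Finset.card_univ, Fintype.card_fin] at hpow
  have hse : (∑ u : Fin n, ((univ.filter (fun v => G v u)).card : ℝ)) = (e:ℝ) := by
    rw [hedef, ← sum_indeg G]
    push_cast
    rfl
  rw [hse] at hpow
  -- Step 3 : combine to nat inequality  c^r * n^r ≤ ∑ d⁻^r
  have hnr1pos : (0:ℝ) < (n:ℝ)^(r-1) := by positivity
  have hchain : ((c:ℕ):ℝ)^r * (n:ℝ)^r ≤ ∑ u : Fin n, ((univ.filter (fun v => G v u)).card : ℝ)^r := by
    calc ((c:ℕ):ℝ)^r * (n:ℝ)^r = (((c:ℕ):ℝ)^r * (n:ℝ)^(2*r-1)) / (n:ℝ)^(r-1) := by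
          rw [show 2*r-1 = r + (r-1) by omega, pow_add]
          field_simp
      _ ≤ (e:ℝ)^r / (n:ℝ)^(r-1) := by
          apply div_le_div_of_nonneg_right hek (le_of_lt hnr1pos)
      _ ≤ _ := hpow
  have hnat : c^r * n^r ≤ ∑ u : Fin n, (univ.filter (fun v => G v u)).card ^ r := by
    exact_mod_cast (by push_cast; exact hchain :
      ((c^r * n^r : ℕ) : ℝ) ≤ ((∑ u : Fin n, (univ.filter (fun v => G v u)).card ^ r : ℕ) : ℝ))
  -- Step 4 : bad sets
  set Bs : Finset (Finset (Fin n)) :=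
    univ.filter (fun S => S.Nonempty ∧ S.card ≤ r ∧ (comN G S).card < h) with hBs
  have hBscard : Bs.card ≤ (r+1) * n^r := by
    have hsub : Bs ⊆ (Finset.range (r+1)).biUnion
        (fun k => Finset.powersetCard k (univ : Finset (Fin n))) := by
      intro S hS
      rw [hBs, mem_filter] at hS
      refine Finset.mem_biUnion.2 ⟨S.card, Finset.mem_range.2 (by omega), ?_⟩
      exact Finset.mem_powersetCard.2 ⟨Finset.subset_univ S, rfl⟩
    calc Bs.card ≤ ((Finset.range (r+1)).biUnion
          (fun k => Finset.powersetCard k (univ : Finset (Fin n)))).card :=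
            Finset.card_le_card hsub
      _ ≤ ∑ k ∈ Finset.range (r+1), (Finset.powersetCard k (univ : Finset (Fin n))).card :=
            Finset.card_biUnion_le
      _ ≤ ∑ k ∈ Finset.range (r+1), n^r := by
            apply Finset.sum_le_sum
            intro k hk
            rw [Finset.mem_range] at hk
            rw [Finset.card_powersetCard, Finset.card_univ, Fintype.card_fin]
            calc n.choose k ≤ n ^ k := Nat.choose_le_pow n k
              _ ≤ n ^ r := Nat.pow_le_pow_right hn1 (by omega)
      _ = (r+1) * n^r := by rw [Finset.sum_const, Finset.card_range, smul_eq_mul]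
  have hSBad : ∑ x : Fin r → Fin n, (Bs.filter (fun S => S ⊆ UxF G r x)).card
      ≤ (r+1) * n^r * h^r := by
    rw [sum_card_bad]
    calc ∑ S ∈ Bs, (comN G S).card ^ r ≤ ∑ S ∈ Bs, h^r := by
          apply Finset.sum_le_sum
          intro S hS
          rw [hBs, mem_filter] at hS
          exact Nat.pow_le_pow_left (le_of_lt hS.2.2.2) r
      _ = Bs.card * h^r := by rw [Finset.sum_const, smul_eq_mul]
      _ ≤ (r+1) * n^r * h^r := Nat.mul_le_mul_right _ hBscard
  -- Step 5 : pigeonhole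
  have hUsum : h * n^r + (∑ x : Fin r → Fin n, (Bs.filter (fun S => S ⊆ UxF G r x)).card) + 1
      ≤ ∑ x : Fin r → Fin n, (UxF G r x).card := by
    rw [sum_card_Ux]
    have h2 : c * n^r ≤ c^r * n^r := Nat.mul_le_mul_right _
      (by calc c = c^1 := (pow_one c).symm
          _ ≤ c^r := Nat.pow_le_pow_right (by omega) hr)
    have h3 : c * n^r = h * n^r + (r+1) * n^r * h^r + n^r := by rw [hc]; ring
    have h4 : 1 ≤ n^r := Nat.one_le_pow r n (by omega)
    omega
  haveI : Nonempty (Fin n) := ⟨⟨0, by omega⟩⟩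
  have hx : ∃ x : Fin r → Fin n,
      (Bs.filter (fun S => S ⊆ UxF G r x)).card + h ≤ (UxF G r x).card := by
    by_contra hcon
    push_neg at hcon
    have hlt : ∑ x : Fin r → Fin n, (UxF G r x).card
        < ∑ x : Fin r → Fin n, ((Bs.filter (fun S => S ⊆ UxF G r x)).card + h) := by
      apply Finset.sum_lt_sum_of_nonempty Finset.univ_nonempty
      intro x _
      have := hcon x
      omega
    rw [Finset.sum_add_distrib, Finset.sum_const, Finset.card_univ, smul_eq_mul] at hlt
    have hcard : Fintype.card (Fin r → Fin n) * h = h * n ^ r := by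
      rw [Fintype.card_fun, Fintype.card_fin, Fintype.card_fin, Nat.mul_comm]
    rw [hcard] at hlt
    omega
  obtain ⟨x, hxgood⟩ := hx
  -- Step 6 : deletion
  set U : Finset (Fin n) := UxF G r x with hU
  set Badx : Finset (Finset (Fin n)) := Bs.filter (fun S => S ⊆ U) with hBadx
  set pick : Finset (Fin n) → Fin n := fun S => if hS : S.Nonempty then hS.choose else x ⟨0, hr⟩
    with hpick
  have hpickmem : ∀ S : Finset (Fin n), S.Nonempty → pick S ∈ S := by
    intro S hS
    rw [hpick]
    simp only [hS, dif_pos]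
    exact hS.choose_spec
  refine ⟨U \ Badx.image pick, ?_, ?_⟩
  · have h1' : (Badx.image pick).card ≤ Badx.card := Finset.card_image_le
    have h2' := Finset.le_card_sdiff (Badx.image pick) U
    omega
  · intro S hSU hSne hScard
    by_contra hbad
    push_neg at hbad
    have hSBs : S ∈ Bs := by
      rw [hBs, mem_filter]
      exact ⟨mem_univ _, hSne, hScard, hbad⟩
    have hSsubU : S ⊆ U := fun v hv => (Finset.mem_sdiff.mp (hSU hv)).1
    have hSBadx : S ∈ Badx := by rw [hBadx, mem_filter]; exact ⟨hSBs, hSsubU⟩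
    have hpS : pick S ∈ S := hpickmem S hSne
    have : pick S ∈ U \ Badx.image pick := hSU hpS
    rw [Finset.mem_sdiff] at this
    exact this.2 (Finset.mem_image_of_mem pick hSBadx)

lemma copies_of_dense {V : Type*} [Fintype V] [Nonempty V] {r : ℕ} (hr : 1 ≤ r)
    (A B : Set V) (hcover : ∀ v, v ∈ A ∨ v ∈ B) (hdisj : A ∩ B = ∅)
    (H : V → V → Prop) (harcs : ∀ u v, H u v → u ∈ A ∧ v ∈ B)
    (hdeg : ∀ a ∈ A, {b ∈ B | H a b}.ncard ≤ r)
    {n : ℕ} (hn : Fintype.card V ≤ n)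
    (G : Fin n → Fin n → Prop) [DecidableRel G]
    (he : ((Fintype.card V + (r+1) * (Fintype.card V)^r + 1 : ℕ) : ℝ)
        * (n : ℝ) ^ ((2:ℝ) - 1/(r:ℝ))
      ≤ ((univ.filter (fun p : Fin n × Fin n => G p.1 p.2)).card : ℝ)) :
    Copies H G := by
  obtain ⟨U', hc, hgood⟩ := exists_good_set hr Fintype.card_pos hn G he
  exact embed_lemma A B hcover hdisj H harcs hdeg G U' hc hgood

/-- if `H` is a bipartite digraph with all arcs from `A` to `B` and every
vertex of `A` has at most `r ≥ 1` out-neighbours, then there is `c > 0` with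
`exo(n, H) ≤ c · n^{2 - 1/r}` for all `n`. -/
theorem stmt_0 {V : Type*} [Fintype V] (r : ℕ) (hr : 1 ≤ r)
    (A B : Set V) (hcover : ∀ v, v ∈ A ∨ v ∈ B) (hdisj : A ∩ B = ∅)
    (H : V → V → Prop) (harcs : ∀ u v, H u v → u ∈ A ∧ v ∈ B)
    (hdeg : ∀ a ∈ A, {b ∈ B | H a b}.ncard ≤ r) :
    ∃ c : ℝ, 0 < c ∧ ∀ n : ℕ, (exo n H : ℝ) ≤ c * (n : ℝ) ^ (2 - 1 / (r : ℝ) : ℝ) := by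
  classical
  by_cases hV : Nonempty V
  · -- V nonempty : the real case
    set h : ℕ := Fintype.card V with hhdef
    have h1 : 1 ≤ h := Fintype.card_pos
    set c1 : ℕ := h + (r+1) * h^r + 1 with hc1
    set c : ℕ := h + c1 with hcdef
    have hc1c : (c1:ℝ) ≤ (c:ℝ) := by exact_mod_cast Nat.le_add_left c1 h
    have hhc : (h:ℝ) ≤ (c:ℝ) := by exact_mod_cast Nat.le_add_right h c1
    refine ⟨(c:ℕ), by positivity, fun n => ?_⟩
    have hδ : (1:ℝ)/(r:ℝ) ≤ 1 := by
      apply div_le_one_of_le₀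
      · exact_mod_cast hr
      · positivity
    have hrhs0 : (0:ℝ) ≤ (c:ℝ) * (n:ℝ) ^ ((2:ℝ) - 1/(r:ℝ)) := by positivity
    have hbound : ∀ m ∈ {m : ℕ | ∃ G : Fin n → Fin n → Prop,
        (∀ v, ¬ G v v) ∧ (∀ u v, G u v → ¬ G v u) ∧
        ¬ Copies H G ∧ {p : Fin n × Fin n | G p.1 p.2}.ncard = m},
        (m:ℝ) ≤ (c:ℝ) * (n:ℝ) ^ ((2:ℝ) - 1/(r:ℝ)) := by
      rintro m ⟨G, hirr, hasym, hfree, hm⟩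
      have hmE : m = (univ.filter (fun p : Fin n × Fin n => G p.1 p.2)).card := by
        rw [← hm]
        have : {p : Fin n × Fin n | G p.1 p.2}
            = ↑(univ.filter (fun p : Fin n × Fin n => G p.1 p.2)) := by
          ext p; simp
        rw [this, Set.ncard_coe_finset]
      rcases lt_or_ge n h with hnh | hnh
      · -- small n
        rcases Nat.eq_zero_or_pos n with rfl | hn1
        · have : m = 0 := by
            rw [hmE]
            simp [Finset.card_eq_zero]
          rw [this]
          exact_mod_cast hrhs0
        · have hm2 : m ≤ n^2 := by
            rw [hmE]
            calc (univ.filter (fun p : Fin n × Fin n => G p.1 p.2)).card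
                ≤ (univ : Finset (Fin n × Fin n)).card := Finset.card_le_univ _
              _ = n^2 := by
                  rw [Finset.card_univ, Fintype.card_prod, Fintype.card_fin]
                  ring
          have hn0 : (0:ℝ) < (n:ℝ) := by exact_mod_cast hn1
          have hnR1 : (1:ℝ) ≤ (n:ℝ) := by exact_mod_cast hn1
          calc (m:ℝ) ≤ ((n^2 : ℕ):ℝ) := by exact_mod_cast hm2
            _ = (n:ℝ) ^ ((2:ℝ)) := by
                rw [show ((2:ℝ)) = ((2:ℕ):ℝ) by norm_num, Real.rpow_natCast]
                push_cast
                ring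
            _ = (n:ℝ) ^ ((2:ℝ) - 1/(r:ℝ)) * (n:ℝ) ^ ((1:ℝ)/(r:ℝ)) := by
                rw [← Real.rpow_add hn0]
                norm_num
            _ ≤ (n:ℝ) ^ ((2:ℝ) - 1/(r:ℝ)) * (n:ℝ) ^ ((1:ℝ)) := by
                apply mul_le_mul_of_nonneg_left _ (by positivity)
                exact Real.rpow_le_rpow_of_exponent_le hnR1 hδ
            _ ≤ (n:ℝ) ^ ((2:ℝ) - 1/(r:ℝ)) * (h:ℝ) := by
                apply mul_le_mul_of_nonneg_left _ (by positivity)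
                rw [Real.rpow_one]
                exact_mod_cast le_of_lt hnh
            _ ≤ (c:ℝ) * (n:ℝ) ^ ((2:ℝ) - 1/(r:ℝ)) := by
                rw [mul_comm]
                apply mul_le_mul_of_nonneg_right hhc (by positivity)
      · -- large n : use the main lemma
        by_contra hgt
        push_neg at hgt
        apply hfree
        apply copies_of_dense hr A B hcover hdisj H harcs hdeg hnh G
        rw [← hc1]
        calc (c1:ℝ) * (n:ℝ) ^ ((2:ℝ) - 1/(r:ℝ))
            ≤ (c:ℝ) * (n:ℝ) ^ ((2:ℝ) - 1/(r:ℝ)) := by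
              apply mul_le_mul_of_nonneg_right hc1c (by positivity)
          _ ≤ (m:ℝ) := le_of_lt hgt
          _ = _ := by rw [hmE]
    have hfloor : exo n H ≤ ⌊(c:ℝ) * (n:ℝ) ^ ((2:ℝ) - 1/(r:ℝ))⌋₊ := by
      rw [exo]
      exact csSup_le' (fun m hm => Nat.le_floor (hbound m hm))
    calc (exo n H : ℝ) ≤ (⌊(c:ℝ) * (n:ℝ) ^ ((2:ℝ) - 1/(r:ℝ))⌋₊ : ℝ) := by exact_mod_cast hfloor
      _ ≤ (c:ℝ) * (n:ℝ) ^ ((2:ℝ) - 1/(r:ℝ)) := Nat.floor_le hrhs0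
      _ = (c:ℝ) * (n:ℝ) ^ ((2:ℝ) - 1/(r:ℝ)) := rfl
  · -- V empty
    have hempty : IsEmpty V := not_nonempty_iff.mp hV
    refine ⟨1, one_pos, fun n => ?_⟩
    have hzero : exo n H = 0 := by
      have hset : {m : ℕ | ∃ G : Fin n → Fin n → Prop,
          (∀ v, ¬ G v v) ∧ (∀ u v, G u v → ¬ G v u) ∧
          ¬ Copies H G ∧ {p : Fin n × Fin n | G p.1 p.2}.ncard = m} = ∅ := by
        ext m
        simp only [Set.mem_setOf_eq, Set.mem_empty_iff_false, iff_false, not_exists]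
        rintro G ⟨_, _, hfree, _⟩
        exact hfree ⟨fun v => hempty.elim v, fun a => (hempty.elim a),
          fun a => (hempty.elim a)⟩
      rw [exo, hset]
      exact csSup_empty
    rw [hzero]
    have : (0:ℝ) ≤ 1 * (n:ℝ) ^ (2 - 1/(r:ℝ) : ℝ) := by positivity
    exact_mod_cast this
end

section
/- Let F be an oriented graph and let k ≥ 2. Suppose that there exists a tournament on k−1 vertices into which F admits no homomorphism, and that every tournament on k vertices contains a copy of F. Then for every n, exo(n, F) = e(T(n, k−1)), the number of edges of the Turán graph T(n, k−1). -/
/-- A tournament: an asymmetric relation where any two distinct vertices are joined. -/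
def IsTournament {α : Type*} (T : α → α → Prop) : Prop :=
  (∀ u v, T u v → ¬ T v u) ∧ ∀ u v, u ≠ v → T u v ∨ T v u

/-- The number of edges of the Turán graph `T(n,k)`. -/
noncomputable def eTuran (n k : ℕ) : ℕ := (SimpleGraph.turanGraph n k).edgeSet.ncard

/-!
Orient the Turán graph `T(n, k-1)` by blowing up the tournament `T` on `k-1` vertices that `F`
does not map to: vertex `v` goes to class `v % (k-1)`, and an arc between two classes points the
way `T` does. A copy of `F` in the blow-up would project to a homomorphism `F → T`, so the blow-up
is `F`-free and `exo(n, F) ≥ e(T(n, k-1))`. Conversely, in an `F`-free oriented graph any `k`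
pairwise adjacent vertices would span a tournament on `k` vertices, which contains `F`; so the
underlying simple graph is `K_k`-free and Turán's theorem bounds its number of edges.
-/

open Function SimpleGraph

section Copies

variable {α β γ δ : Type*}

theorem Copies.trans {F : α → α → Prop} {G : β → β → Prop} {H : γ → γ → Prop}
    (hFG : Copies F G) (hGH : Copies G H) : Copies F H := by
  obtain ⟨f, hf, hfF⟩ := hFG
  obtain ⟨g, hg, hgG⟩ := hGH
  exact ⟨g ∘ f, hg.comp hf, fun a b hab => hgG _ _ (hfF a b hab)⟩

theorem copies_onFun {G : β → β → Prop} {g : γ → β} (hg : Injective g) :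
    Copies (G on g) G :=
  ⟨g, hg, fun _ _ h => h⟩

theorem Copies.exists_hom_onFun {F : α → α → Prop} {T : δ → δ → Prop} {m : β → δ}
    (h : Copies F (T on m)) : ∃ f : α → δ, ∀ a b, F a b → T (f a) (f b) := by
  obtain ⟨f, -, hf⟩ := h
  exact ⟨m ∘ f, hf⟩

end Copies

section Tournament

variable {V W : Type*} {T : W → W → Prop}

theorem IsTournament.irrefl (hT : IsTournament T) (w : W) : ¬ T w w :=
  fun hw => hT.1 _ _ hw hw

theorem IsTournament.fromRel_onFun_adj (hT : IsTournament T) {m : V → W} {u v : V} :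
    (fromRel (T on m)).Adj u v ↔ m u ≠ m v := by
  rw [fromRel_adj]
  constructor
  · rintro ⟨-, h | h⟩ huv <;> change T (m _) (m _) at h <;> rw [huv] at h <;>
      exact hT.irrefl _ h
  · intro h
    exact ⟨fun huv => h (congrArg m huv), hT.2 _ _ h⟩

end Tournament

theorem ncard_setOf_eq_ncard_edgeSet_fromRel {V : Type*} (G : V → V → Prop)
    (hG : ∀ u v, G u v → ¬ G v u) :
    {p : V × V | G p.1 p.2}.ncard = (fromRel G).edgeSet.ncard := by
  have himage : (fromRel G).edgeSet = (fun p : V × V => s(p.1, p.2)) '' {p | G p.1 p.2} := by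
    ext e
    induction e using Sym2.ind with
    | _ u v =>
      simp only [mem_edgeSet, fromRel_adj, Set.mem_image, Set.mem_ofPred_eq, Prod.exists]
      constructor
      · rintro ⟨-, h | h⟩
        · exact ⟨u, v, h, rfl⟩
        · exact ⟨v, u, h, Sym2.eq_swap⟩
      · rintro ⟨a, b, hab, he⟩
        have hne : a ≠ b := fun h => hG _ _ hab (h ▸ hab)
        rcases Sym2.eq_iff.mp he with ⟨rfl, rfl⟩ | ⟨rfl, rfl⟩
        · exact ⟨hne, Or.inl hab⟩
        · exact ⟨hne.symm, Or.inr hab⟩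
  rw [himage, Set.InjOn.ncard_image]
  rintro ⟨a, b⟩ hab ⟨c, d⟩ hcd he
  rcases Sym2.eq_iff.mp he with ⟨rfl, rfl⟩ | ⟨rfl, rfl⟩
  · rfl
  · exact absurd hcd (hG _ _ hab)

theorem ncard_edgeSet_eq_card_edgeFinset {V : Type*} [Fintype V] (G : SimpleGraph V)
    [DecidableRel G.Adj] : G.edgeSet.ncard = G.edgeFinset.card := by
  rw [← coe_edgeFinset, Set.ncard_coe_finset]

theorem fromRel_onFun_mod_eq_turanGraph {n r : ℕ} (hr : 0 < r) {T : Fin r → Fin r → Prop}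
    (hT : IsTournament T) :
    fromRel (T on fun v : Fin n => (⟨v % r, Nat.mod_lt _ hr⟩ : Fin r)) = turanGraph n r := by
  ext u v
  rw [hT.fromRel_onFun_adj, turanGraph_adj, Ne, Fin.mk.injEq]

theorem exists_free_ncard_eq_eTuran {α : Type*} {F : α → α → Prop} {r : ℕ} (hr : 0 < r)
    {T : Fin r → Fin r → Prop} (hT : IsTournament T)
    (hF : ¬ ∃ f : α → Fin r, ∀ a b, F a b → T (f a) (f b)) (n : ℕ) :
    ∃ G : Fin n → Fin n → Prop, (∀ v, ¬ G v v) ∧ (∀ u v, G u v → ¬ G v u) ∧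
      ¬ Copies F G ∧ {p : Fin n × Fin n | G p.1 p.2}.ncard = eTuran n r := by
  set m : Fin n → Fin r := fun v => ⟨v % r, Nat.mod_lt _ hr⟩
  refine ⟨T on m, fun v => hT.irrefl (m v), fun u v => hT.1 _ _,
    fun h => hF h.exists_hom_onFun, ?_⟩
  rw [ncard_setOf_eq_ncard_edgeSet_fromRel (T on m) fun u v => hT.1 _ _,
    fromRel_onFun_mod_eq_turanGraph hr hT, eTuran]

theorem cliqueFree_fromRel_of_not_copies {α V : Type*} {F : α → α → Prop} {k : ℕ}
    (hF : ∀ T : Fin k → Fin k → Prop, IsTournament T → Copies F T)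
    {G : V → V → Prop} (hG : ∀ u v, G u v → ¬ G v u) (hGF : ¬ Copies F G) :
    (fromRel G).CliqueFree k := by
  rw [cliqueFree_iff]
  refine ⟨fun c => hGF ((hF (G on c) ?_).trans (copies_onFun c.injective))⟩
  refine ⟨fun i j => hG _ _, fun i j hij => ?_⟩
  exact ((fromRel_adj _ _ _).mp (c.toHom.map_adj hij)).2

theorem ncard_le_eTuran_of_not_copies {α : Type*} {F : α → α → Prop} {k : ℕ} (hk : 2 ≤ k)
    (hF : ∀ T : Fin k → Fin k → Prop, IsTournament T → Copies F T) {n : ℕ}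
    {G : Fin n → Fin n → Prop} (hG : ∀ u v, G u v → ¬ G v u) (hGF : ¬ Copies F G) :
    {p : Fin n × Fin n | G p.1 p.2}.ncard ≤ eTuran n (k - 1) := by
  classical
  have hcf : (fromRel G).CliqueFree (k - 1 + 1) := by
    rw [Nat.sub_add_cancel (by omega)]
    exact cliqueFree_fromRel_of_not_copies hF hG hGF
  rw [ncard_setOf_eq_ncard_edgeSet_fromRel G hG, eTuran, ncard_edgeSet_eq_card_edgeFinset,
    ncard_edgeSet_eq_card_edgeFinset]
  exact (isTuranMaximal_turanGraph (by omega)).2 hcf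

theorem stmt_2_general {α : Type*} (F : α → α → Prop)
    (k : ℕ) (hk : 2 ≤ k)
    (h1 : ∃ T : Fin (k - 1) → Fin (k - 1) → Prop, IsTournament T ∧
      ¬ ∃ f : α → Fin (k - 1), ∀ a b, F a b → T (f a) (f b))
    (h2 : ∀ T : Fin k → Fin k → Prop, IsTournament T → Copies F T) :
    ∀ n : ℕ, exo n F = eTuran n (k - 1) := by
  intro n
  obtain ⟨T, hT, hF⟩ := h1
  refine IsGreatest.csSup_eq ⟨exists_free_ncard_eq_eTuran (by omega) hT hF n, ?_⟩
  rintro _ ⟨G, -, hG, hGF, rfl⟩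
  exact ncard_le_eTuran_of_not_copies hk h2 hG hGF

/-- if some tournament on `k-1` vertices admits no homomorphism from `F`
and every tournament on `k` vertices contains a copy of `F`, then
`exo(n,F) = e(T(n,k-1))` for every `n`. -/
theorem stmt_2 {α : Type*} [Fintype α] (F : α → α → Prop)
    (hirr : ∀ v, ¬ F v v) (hasym : ∀ u v, F u v → ¬ F v u)
    (k : ℕ) (hk : 2 ≤ k)
    (h1 : ∃ T : Fin (k - 1) → Fin (k - 1) → Prop, IsTournament T ∧
      ¬ ∃ f : α → Fin (k - 1), ∀ a b, F a b → T (f a) (f b))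
    (h2 : ∀ T : Fin k → Fin k → Prop, IsTournament T → Copies F T) :
    ∀ n : ℕ, exo n F = eTuran n (k - 1) :=
  stmt_2_general F k hk h1 h2
end

section
/- Let F be the oriented graph on four vertices v_1, v_2, v_3, v_4 with arcs v_1→v_2, v_2→v_3 and v_4→v_3. Then there exists N such that for all n ≥ N, exo(n, F) = ⌊n²/4⌋. -/
/-- The 4-vertex oriented graph with arcs `v₁→v₂, v₂→v₃, v₄→v₃`. -/
def F6 (i j : Fin 4) : Prop :=
  (i = 0 ∧ j = 1) ∨ (i = 1 ∧ j = 2) ∨ (i = 3 ∧ j = 2)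

lemma card_filter_lt (n k : ℕ) (hk : k ≤ n) :
    (Finset.univ.filter fun v : Fin n => (v:ℕ) < k).card = k := by
  have h : (Finset.univ.filter fun v : Fin n => (v:ℕ) < k).image Fin.val = Finset.range k := by
    ext m
    simp only [Finset.mem_image, Finset.mem_filter, Finset.mem_univ, true_and, Finset.mem_range]
    constructor
    · rintro ⟨i, hi, rfl⟩; exact hi
    · intro hm; exact ⟨⟨m, lt_of_lt_of_le hm hk⟩, hm, rfl⟩
  have h2 := Finset.card_image_of_injective
    (Finset.univ.filter fun v : Fin n => (v:ℕ) < k) (Fin.val_injective)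
  rw [h, Finset.card_range] at h2
  omega

lemma halves (n : ℕ) : n/2 * (n - n/2) = n^2/4 := by
  rcases Nat.even_or_odd n with ⟨k, hk⟩ | ⟨k, hk⟩
  · subst hk
    rw [show k + k = 2 * k by ring, Nat.mul_div_cancel_left _ (by norm_num),
      show 2*k - k = k by omega, show (2*k)^2 = k*k*4 by ring, Nat.mul_div_cancel _ (by norm_num)]
  · subst hk
    rw [show (2*k+1)/2 = k by omega, show 2*k+1 - k = k + 1 by omega,
      show (2*k+1)^2 = 1 + (k*(k+1))*4 by ring, Nat.add_mul_div_right _ _ (by norm_num)]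
    simp


/-- for sufficiently large `n`, `exo(n, F) = ⌊n²/4⌋`. -/
theorem stmt_6 : ∃ N : ℕ, ∀ n ≥ N, exo n F6 = n ^ 2 / 4 := by
  classical
  refine ⟨8, fun n hn => ?_⟩
  unfold exo
  apply IsGreatest.csSup_eq
  constructor
  · -- membership: bipartite construction
    refine ⟨fun u v => (u : ℕ) < n / 2 ∧ n / 2 ≤ (v : ℕ), ?_, ?_, ?_, ?_⟩
    · intro v hv; omega
    · intro u v h1 h2; omega
    · rintro ⟨f, hinj, hf⟩
      have h01 := hf 0 1 (Or.inl ⟨rfl, rfl⟩)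
      have h12 := hf 1 2 (Or.inr (Or.inl ⟨rfl, rfl⟩))
      omega
    · have hset : {p : Fin n × Fin n | (p.1:ℕ) < n/2 ∧ n/2 ≤ (p.2:ℕ)} =
          ↑((Finset.univ.filter fun v : Fin n => (v:ℕ) < n/2) ×ˢ
            (Finset.univ.filter fun v : Fin n => ¬ ((v:ℕ) < n/2))) := by
        ext p
        simp only [Finset.coe_filter, Finset.mem_coe, Finset.mem_product, Finset.mem_filter,
          Finset.mem_univ, true_and, Set.mem_setOf_eq, not_lt]
      rw [hset, Set.ncard_coe_finset, Finset.card_product]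
      have hc1 := card_filter_lt n (n/2) (by omega)
      have hc2 := Finset.card_filter_add_card_filter_not
        (s := (Finset.univ : Finset (Fin n))) (p := fun v : Fin n => (v:ℕ) < n/2)
      rw [Finset.card_univ, Fintype.card_fin] at hc2
      rw [hc1, show (Finset.univ.filter fun v : Fin n => ¬ ((v:ℕ) < n/2)).card = n - n/2 by omega]
      exact halves n
  · -- upper bound
    rintro m ⟨G, hirr, hasym, hfree, hcard⟩
    -- key structural consequence of F6-freeness
    have hkey : ∀ a b c d : Fin n, G a b → G b c → G d c → d = a ∨ d = b := by
      intro a b c d hab hbc hdc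
      by_contra hcon
      push_neg at hcon
      obtain ⟨hda, hdb⟩ := hcon
      apply hfree
      refine ⟨![a, b, c, d], ?_, ?_⟩
      · have hab' : a ≠ b := fun h => hirr b (h ▸ hab)
        have hbc' : b ≠ c := fun h => hirr c (h ▸ hbc)
        have hac' : a ≠ c := fun h => hasym b c hbc (h ▸ hab)
        have hdc' : d ≠ c := fun h => hirr c (h ▸ hdc)
        intro i j hij
        fin_cases i <;> fin_cases j <;> simp_all
      · rintro i j (⟨rfl, rfl⟩ | ⟨rfl, rfl⟩ | ⟨rfl, rfl⟩) <;> simpa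
    set indeg : Fin n → ℕ := fun c => (Finset.univ.filter fun b => G b c).card with hindeg
    -- m is the sum of in-degrees
    have hsum : m = ∑ c : Fin n, indeg c := by
      rw [← hcard]
      have h1 : {p : Fin n × Fin n | G p.1 p.2} =
          ↑(Finset.univ.filter fun p : Fin n × Fin n => G p.1 p.2) := by
        ext p; simp
      rw [h1, Set.ncard_coe_finset,
        Finset.card_eq_sum_card_fiberwise (f := Prod.snd) (t := Finset.univ)
          (fun _ _ => Finset.mem_univ _)]
      refine Finset.sum_congr rfl fun c _ => ?_
      have h2 : (Finset.univ.filter fun p : Fin n × Fin n => G p.1 p.2).filter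
            (fun p => p.2 = c)
          = (Finset.univ.filter fun b => G b c).image (fun b => (b, c)) := by
        ext ⟨x, y⟩
        simp only [Finset.mem_filter, Finset.mem_univ, true_and, Finset.mem_image,
          Prod.mk.injEq]
        constructor
        · rintro ⟨h, rfl⟩; exact ⟨x, h, rfl, rfl⟩
        · rintro ⟨b, h, rfl, rfl⟩; exact ⟨h, rfl⟩
      rw [h2, Finset.card_image_of_injective _ (fun x y h => (Prod.mk.injEq _ _ _ _).mp h |>.1)]
    -- A = in-degree-0 vertices
    set A : Finset (Fin n) := Finset.univ.filter fun v => indeg v = 0 with hA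
    set a : ℕ := A.card with ha
    have han : a ≤ n := by
      rw [ha]
      calc A.card ≤ (Finset.univ : Finset (Fin n)).card := Finset.card_le_card (Finset.filter_subset _ _)
        _ = n := by simp
    -- key degree bounds
    have hB2 : ∀ c : Fin n, (∃ b, indeg b ≠ 0 ∧ G b c) → indeg c ≤ 2 := by
      rintro c ⟨b, hb, hbc⟩
      obtain ⟨a', ha'⟩ := Finset.card_ne_zero.mp hb
      have ha'b : G a' b := (Finset.mem_filter.mp ha').2
      have hsub : (Finset.univ.filter fun d => G d c) ⊆ {a', b} := by
        intro d hd
        have hdc : G d c := (Finset.mem_filter.mp hd).2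
        rcases hkey a' b c d ha'b hbc hdc with rfl | rfl <;> simp
      calc indeg c ≤ ({a', b} : Finset (Fin n)).card := Finset.card_le_card hsub
        _ ≤ 2 := Finset.card_insert_le _ _ |>.trans (by simp)
    have hnB2 : ∀ c : Fin n, ¬ (∃ b, indeg b ≠ 0 ∧ G b c) → indeg c ≤ a := by
      intro c hc
      push_neg at hc
      have hsub : (Finset.univ.filter fun d => G d c) ⊆ A := by
        intro d hd
        have hdc : G d c := (Finset.mem_filter.mp hd).2
        have := hc d
        simp only [Finset.mem_filter, Finset.mem_univ, true_and, hA]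
        by_contra h
        exact (this h) hdc
      exact Finset.card_le_card hsub
    -- split the sum
    set A' : Finset (Fin n) := Finset.univ.filter fun v => indeg v ≠ 0 with hA'
    have hcards : a + A'.card = n := by
      have := Finset.card_filter_add_card_filter_not
        (s := (Finset.univ : Finset (Fin n))) (p := fun v : Fin n => indeg v = 0)
      simpa [← hA, ← hA'] using this
    have hsum2 : ∑ c : Fin n, indeg c = ∑ c ∈ A', indeg c := by
      rw [hA']
      exact (Finset.sum_filter_ne_zero _).symm
    set P : Fin n → Prop := fun c => ∃ b, indeg b ≠ 0 ∧ G b c with hP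
    set t : ℕ := (A'.filter P).card with ht
    set s : ℕ := (A'.filter fun c => ¬ P c).card with hs
    have hts : t + s = A'.card := Finset.card_filter_add_card_filter_not _
    have hsplit : ∑ c ∈ A', indeg c = ∑ c ∈ A'.filter P, indeg c +
        ∑ c ∈ A'.filter (fun c => ¬ P c), indeg c :=
      (Finset.sum_filter_add_sum_filter_not _ _ _).symm
    have hb1 : ∑ c ∈ A'.filter P, indeg c ≤ 2 * t := by
      rw [ht, mul_comm]
      calc ∑ c ∈ A'.filter P, indeg c ≤ ∑ _c ∈ A'.filter P, 2 :=
            Finset.sum_le_sum fun c hc => hB2 c ((Finset.mem_filter.mp hc).2)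
        _ = (A'.filter P).card * 2 := by rw [Finset.sum_const, smul_eq_mul]
    have hb2 : ∑ c ∈ A'.filter (fun c => ¬ P c), indeg c ≤ s * a := by
      rw [hs]
      calc ∑ c ∈ A'.filter (fun c => ¬ P c), indeg c
          ≤ ∑ _c ∈ A'.filter (fun c => ¬ P c), a :=
            Finset.sum_le_sum fun c hc => hnB2 c ((Finset.mem_filter.mp hc).2)
        _ = (A'.filter (fun c => ¬ P c)).card * a := by rw [Finset.sum_const, smul_eq_mul]
    have hm : m ≤ 2 * t + s * a := by
      rw [hsum, hsum2, hsplit]; omega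
    -- final arithmetic
    have hab : ∀ x y : ℕ, x + y = n → x * y ≤ n^2/4 := by
      intro x y hxy
      rw [Nat.le_div_iff_mul_le (by norm_num)]
      have h2 : 2 * (x * y) ≤ x^2 + y^2 := by
        have := two_mul_le_add_sq x y
        linarith [this]
      calc x * y * 4 ≤ x^2 + 2*(x*y) + y^2 := by nlinarith
        _ = (x + y)^2 := by ring
        _ = n^2 := by rw [hxy]
    rcases le_or_gt 2 a with h2a | h2a
    · have hstep : 2 * t + s * a ≤ a * (t + s) := by
        have h1 : 2 * t ≤ a * t := Nat.mul_le_mul_right t h2a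
        have h2 : s * a = a * s := mul_comm s a
        rw [Nat.mul_add]; omega
      have hfin := hab a (t + s) (by omega)
      calc m ≤ 2 * t + s * a := hm
        _ ≤ a * (t + s) := hstep
        _ ≤ n^2/4 := hfin
    · -- a ≤ 1
      have h1 : s * a ≤ s := by
        calc s * a ≤ s * 1 := Nat.mul_le_mul_left s (by omega)
          _ = s := mul_one s
      have h2n : 2 * n ≤ n^2/4 := by
        rw [Nat.le_div_iff_mul_le (by norm_num)]
        calc 2 * n * 4 = 8 * n := by ring
          _ ≤ n * n := Nat.mul_le_mul_right n hn
          _ = n^2 := (sq n).symm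
      omega
end

section
/- Let q ≥ 1 and let S_{0,q} denote the oriented star on q+1 vertices consisting of a center vertex with q out-neighbours (all arcs directed from the center to the leaves). Then for every n ≥ 2q−1, exo(n, S_{0,q}) = (q−1)·n. -/
/-- The oriented star `S_{0,q}` on `q+1` vertices: the center `0` has `q` out-neighbours. -/
def outStar (q : ℕ) (i j : Fin (q + 1)) : Prop :=
  (i : ℕ) = 0 ∧ (j : ℕ) ≠ 0

/-!
A copy of `S_{0,q}` is just a vertex of out-degree at least `q`, so an `S_{0,q}`-free oriented
graph has all out-degrees at most `q - 1` and hence at most `(q - 1) n` arcs. The bound is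
attained by the circulant graph `i → i + d (mod n)`, `1 ≤ d < q`: it is `(q - 1)`-out-regular,
and it is oriented because `n ≥ 2q - 1` keeps `d` and `-d` from both lying in `[1, q)`.
-/

open Finset

noncomputable def outDegree {β : Type*} (G : β → β → Prop) (v : β) : ℕ :=
  Nat.card {u // G v u}

section OutDegree

variable {β : Type*} (G : β → β → Prop)

theorem ncard_arcs_eq_sum_outDegree [Fintype β] :
    {p : β × β | G p.1 p.2}.ncard = ∑ v, outDegree G v := by
  rw [← Nat.card_coe_set_eq]
  exact (Nat.card_congr (Equiv.subtypeProdEquivSigmaSubtype G)).trans Nat.card_sigma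

theorem copies_outStar_of_le_outDegree [Finite β] (hG : ∀ v, ¬ G v v) {q : ℕ} {v : β}
    (hv : q ≤ outDegree G v) : Copies (outStar q) G := by
  classical
  have := Fintype.ofFinite β
  obtain ⟨e⟩ : Nonempty (Fin q ↪ {u // G v u}) :=
    Function.Embedding.nonempty_of_card_le <| by
      simpa [outDegree, Nat.card_eq_fintype_card] using hv
  have hne : ∀ i, v ≠ e i := fun i h => hG v (by simpa [← h] using (e i).2)
  refine ⟨Fin.cases v (fun i => e i), ?_, ?_⟩
  · intro a b hab
    cases a using Fin.cases <;> cases b using Fin.cases <;>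
      simp only [Fin.cases_zero, Fin.cases_succ] at hab
    · rfl
    · exact absurd hab (hne _)
    · exact absurd hab.symm (hne _)
    · rw [e.injective (Subtype.ext hab)]
  · rintro a b ⟨ha, hb⟩
    obtain rfl : a = 0 := Fin.ext ha
    obtain ⟨j, rfl⟩ := Fin.exists_succ_eq.2 (Fin.ne_of_val_ne hb)
    simpa only [Fin.cases_zero, Fin.cases_succ] using (e j).2

theorem exists_le_outDegree_of_copies_outStar [Finite β] {q : ℕ}
    (h : Copies (outStar q) G) : ∃ v, q ≤ outDegree G v := by
  obtain ⟨f, hf, hstar⟩ := h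
  let leaf (i : Fin q) : {u // G (f 0) u} :=
    ⟨f i.succ, hstar 0 i.succ ⟨rfl, Nat.succ_ne_zero _⟩⟩
  have hleaf : Function.Injective leaf := fun i j hij =>
    Fin.succ_injective _ (hf (congrArg Subtype.val hij))
  exact ⟨f 0, by simpa [outDegree] using Nat.card_le_card_of_injective leaf hleaf⟩

theorem copies_outStar_iff [Finite β] (hG : ∀ v, ¬ G v v) {q : ℕ} :
    Copies (outStar q) G ↔ ∃ v, q ≤ outDegree G v :=
  ⟨exists_le_outDegree_of_copies_outStar G,
    fun ⟨_, hv⟩ => copies_outStar_of_le_outDegree G hG hv⟩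

theorem ncard_arcs_le_of_not_copies_outStar [Fintype β] (hG : ∀ v, ¬ G v v) {q : ℕ}
    (hfree : ¬ Copies (outStar q) G) :
    {p : β × β | G p.1 p.2}.ncard ≤ (q - 1) * Fintype.card β := by
  have hdeg (v : β) : outDegree G v ≤ q - 1 := by
    by_contra! h
    exact hfree ((copies_outStar_iff G hG).2 ⟨v, by omega⟩)
  calc {p : β × β | G p.1 p.2}.ncard = ∑ v, outDegree G v := ncard_arcs_eq_sum_outDegree G
    _ ≤ ∑ _v : β, (q - 1) := sum_le_sum fun v _ => hdeg v
    _ = (q - 1) * Fintype.card β := by simp [mul_comm]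

end OutDegree

section Cayley

variable {A : Type*} [AddGroup A] (D : Set A)

def addCayley (a b : A) : Prop :=
  b - a ∈ D

theorem addCayley_irrefl (h0 : (0 : A) ∉ D) (a : A) : ¬ addCayley D a a := by
  simpa [addCayley] using h0

theorem addCayley_asymm (hD : ∀ d ∈ D, -d ∉ D) {a b : A} (hab : addCayley D a b) :
    ¬ addCayley D b a := by
  unfold addCayley at *
  rw [← neg_sub]
  exact hD _ hab

theorem outDegree_addCayley (a : A) : outDegree (addCayley D) a = D.ncard := by
  rw [← Nat.card_coe_set_eq]
  exact Nat.card_congr ((Equiv.subRight a).subtypeEquiv fun _ => Iff.rfl)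

end Cayley

section Circulant

variable {n q : ℕ}

theorem Fin.neg_notMem_preimage_val_Ico (hn : 2 * q - 1 ≤ n) (d : Fin n)
    (hd : d ∈ Fin.val ⁻¹' Set.Ico 1 q) : -d ∉ Fin.val ⁻¹' Set.Ico 1 q := by
  simp only [Set.mem_preimage, Set.mem_Ico, Fin.val_neg'] at hd ⊢
  rw [Nat.mod_eq_of_lt (by omega)]
  omega

theorem Fin.ncard_preimage_val_Ico (hqn : q ≤ n) :
    (Fin.val ⁻¹' Set.Ico 1 q : Set (Fin n)).ncard = q - 1 := by
  rw [Set.ncard_preimage_of_injective_subset_range Fin.val_injective, Set.ncard_Ico_nat]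
  intro m hm
  exact ⟨⟨m, by simp only [Set.mem_Ico] at hm; omega⟩, rfl⟩

theorem exists_oriented_not_copies_outStar (hq : 1 ≤ q) (hn : 2 * q - 1 ≤ n) :
    ∃ G : Fin n → Fin n → Prop, (∀ v, ¬ G v v) ∧ (∀ u v, G u v → ¬ G v u) ∧
      ¬ Copies (outStar q) G ∧ {p : Fin n × Fin n | G p.1 p.2}.ncard = (q - 1) * n := by
  have : NeZero n := ⟨by omega⟩
  set D : Set (Fin n) := Fin.val ⁻¹' Set.Ico 1 q
  have hirr := addCayley_irrefl D (by simp [D])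
  have hdeg (v : Fin n) : outDegree (addCayley D) v = q - 1 :=
    (outDegree_addCayley D v).trans (Fin.ncard_preimage_val_Ico (by omega))
  refine ⟨addCayley D, hirr, fun _ _ => addCayley_asymm D (Fin.neg_notMem_preimage_val_Ico hn),
    ?_, ?_⟩
  · rw [copies_outStar_iff _ hirr]
    rintro ⟨v, hv⟩
    rw [hdeg] at hv
    omega
  · simp [ncard_arcs_eq_sum_outDegree, hdeg, mul_comm]

end Circulant

/-- for `q ≥ 1` and every `n ≥ 2q - 1`, `exo(n, S_{0,q}) = (q-1)·n`. -/
theorem stmt_7 (q : ℕ) (hq : 1 ≤ q) :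
    ∀ n : ℕ, 2 * q - 1 ≤ n → exo n (outStar q) = (q - 1) * n := by
  intro n hn
  refine IsGreatest.csSup_eq ⟨exists_oriented_not_copies_outStar hq hn, ?_⟩
  rintro m ⟨G, hirr, -, hfree, rfl⟩
  simpa using ncard_arcs_le_of_not_copies_outStar G hirr hfree
end

section
/- Let k ≥ 1 and let M_k denote the oriented matching with k arcs, i.e. the oriented graph on 2k vertices consisting of k pairwise vertex-disjoint arcs. Then there exists N such that for all n ≥ N, exo(n, M_k) = (k−1)(n−k+1) + binom(k−1, 2). -/
/-- The oriented matching with `k` arcs on `2k` vertices: arcs `2i → 2i+1`. -/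
def orientedMatching (k : ℕ) (i j : Fin (2 * k)) : Prop :=
  (i : ℕ) % 2 = 0 ∧ (j : ℕ) = (i : ℕ) + 1

/-!
An oriented graph contains `M_k` exactly when its underlying simple graph has `k` pairwise
disjoint edges, and its arcs correspond to the edges of that graph, so it suffices to bound the
number of edges of a simple graph `H` on `n` vertices without `j + 1 = k` disjoint edges.

Let `S` be the set of vertices of degree `> 2j` and `M` a maximum matching avoiding `S`. Matching
the vertices of `S` greedily to fresh neighbours extends `M` by `#S` edges, so `#M + #S ≤ j`, and
by maximality `S ∪ V(M)` covers every edge. If `#S = j`, then `M = ∅`, the edges all meet the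
`j`-set `S`, and there are at most `C(j, 2) + j (n - j)` of them. Otherwise the cover has at most
`j - 1` vertices of degree `< n` and at most `2j` vertices of degree `≤ 2j`, which allows at most
`(j - 1)(n - 1) + 4j²` edges, fewer than `j (n - j)` once `n > 5j²`.

The bound is attained by the arcs `u → v` with `u < v` and `u < j`: every arc leaves one of `j`
vertices, so no `j + 1` arcs are disjoint.
-/

open Finset

lemma sub_one_mul_sub_one_add_le {j n : ℕ} (hn : 5 * j ^ 2 < n) :
    (j - 1) * (n - 1) + 2 * j * (2 * j) ≤ j * (n - j) := by
  have : j ≤ n := by nlinarith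
  rcases Nat.eq_zero_or_pos j with rfl | hj
  · simp
  zify [this, hj, show 1 ≤ n by omega]
  nlinarith

namespace SimpleGraph

variable {V : Type*} [DecidableEq V] (H : SimpleGraph V)

def IsPairMatching (M : Finset (V × V)) : Prop :=
  (∀ p ∈ M, H.Adj p.1 p.2) ∧
    (M : Set (V × V)).PairwiseDisjoint fun p => ({p.1, p.2} : Finset V)

def pairSupport (M : Finset (V × V)) : Finset V :=
  M.biUnion fun p => {p.1, p.2}

variable {H} {M M' : Finset (V × V)}

lemma mem_pairSupport {v : V} : v ∈ pairSupport M ↔ ∃ p ∈ M, v = p.1 ∨ v = p.2 := by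
  simp [pairSupport]

lemma pairSupport_insert (p : V × V) (M : Finset (V × V)) :
    pairSupport (insert p M) = {p.1, p.2} ∪ pairSupport M :=
  biUnion_insert

lemma card_pairSupport_le (M : Finset (V × V)) : #(pairSupport M) ≤ 2 * #M := by
  calc #(pairSupport M) ≤ ∑ p ∈ M, #({p.1, p.2} : Finset V) := card_biUnion_le
    _ ≤ ∑ _p ∈ M, 2 := sum_le_sum fun p _ => card_le_two
    _ = 2 * #M := by rw [sum_const, smul_eq_mul, mul_comm]

lemma IsPairMatching.subset (hM : H.IsPairMatching M) (h : M' ⊆ M) : H.IsPairMatching M' :=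
  ⟨fun p hp => hM.1 p (h hp), hM.2.subset (by simpa using h)⟩

lemma IsPairMatching.eq_of_mem {p q : V × V} (hM : H.IsPairMatching M) (hp : p ∈ M)
    (hq : q ∈ M) {v : V} (hvp : v = p.1 ∨ v = p.2) (hvq : v = q.1 ∨ v = q.2) : p = q :=
  hM.2.elim_finset hp hq v (by simpa using hvp) (by simpa using hvq)

lemma IsPairMatching.insert_adj (hM : H.IsPairMatching M) {a b : V} (hab : H.Adj a b)
    (ha : a ∉ pairSupport M) (hb : b ∉ pairSupport M) :
    H.IsPairMatching (insert (a, b) M) ∧ #(insert (a, b) M) = #M + 1 := by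
  have hnot : (a, b) ∉ M := fun h => ha (mem_pairSupport.2 ⟨_, h, Or.inl rfl⟩)
  refine ⟨⟨forall_mem_insert _ _ _ |>.2 ⟨hab, hM.1⟩, ?_⟩, card_insert_of_notMem hnot⟩
  rw [coe_insert]
  refine hM.2.insert fun q hq _ => ?_
  simp only [disjoint_insert_left, disjoint_singleton_left, mem_insert, mem_singleton, not_or]
  exact ⟨⟨fun h => ha (mem_pairSupport.2 ⟨q, hq, Or.inl h⟩),
      fun h => ha (mem_pairSupport.2 ⟨q, hq, Or.inr h⟩)⟩,
    fun h => hb (mem_pairSupport.2 ⟨q, hq, Or.inl h⟩),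
      fun h => hb (mem_pairSupport.2 ⟨q, hq, Or.inr h⟩)⟩

lemma IsPairMatching.isVertexCover_of_maximal {S : Finset V} (hM : H.IsPairMatching M)
    (hMS : Disjoint (pairSupport M) S)
    (hmax : ∀ M', H.IsPairMatching M' → Disjoint (pairSupport M') S → #M' ≤ #M) :
    H.IsVertexCover ↑(S ∪ pairSupport M) := by
  intro u v huv
  by_contra! h
  simp only [coe_union, Set.mem_union, mem_coe, not_or] at h
  obtain ⟨⟨huS, huM⟩, hvS, hvM⟩ := h
  obtain ⟨hM', hcard⟩ := hM.insert_adj huv huM hvM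
  have hdisj : Disjoint (pairSupport (insert (u, v) M)) S := by
    rw [pairSupport_insert, disjoint_union_left]
    exact ⟨by simp [huS, hvS], hMS⟩
  have := hmax _ hM' hdisj
  omega

variable [Fintype V] [DecidableRel H.Adj]

/-- A matching avoiding a set `T` of vertices of degree `> 2j` can be enlarged by `#T` edges, as
long as it stays of size at most `j + 1`: a vertex of `T` always has a neighbour outside the
at most `2j` vertices already used. -/
lemma IsPairMatching.exists_card_ge_of_le_degree {j : ℕ} {T : Finset V}
    (hT : ∀ t ∈ T, 2 * j + 1 ≤ H.degree t) (hM : H.IsPairMatching M)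
    (hMT : Disjoint (pairSupport M) T) :
    ∃ M', H.IsPairMatching M' ∧ min (#M + #T) (j + 1) ≤ #M' := by
  induction T using Finset.induction_on generalizing M with
  | empty => exact ⟨M, hM, by simp⟩
  | insert t T ht ih =>
    have hT' : ∀ t ∈ T, 2 * j + 1 ≤ H.degree t := fun s hs => hT s (mem_insert_of_mem hs)
    have hMT' : Disjoint (pairSupport M) T := hMT.mono_right (subset_insert t T)
    rw [card_insert_of_notMem ht]
    by_cases hbig : j + 1 ≤ #M + #T
    · obtain ⟨M', hM', hcard⟩ := ih hT' hM hMT'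
      exact ⟨M', hM', by omega⟩
    have hfree : #(pairSupport M ∪ T) < #(H.neighborFinset t) := by
      have := card_pairSupport_le M
      have := card_union_le (pairSupport M) T
      have := hT t (mem_insert_self t T)
      rw [card_neighborFinset_eq_degree]
      omega
    obtain ⟨u, hut, hu⟩ := exists_mem_notMem_of_card_lt_card hfree
    rw [mem_neighborFinset] at hut
    rw [mem_union, not_or] at hu
    have htM : t ∉ pairSupport M := disjoint_right.1 hMT (mem_insert_self t T)
    obtain ⟨hM₁, hcard₁⟩ := hM.insert_adj hut htM hu.1
    have hM₁T : Disjoint (pairSupport (insert (t, u) M)) T := by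
      rw [pairSupport_insert, disjoint_union_left]
      exact ⟨by simp [ht, hu.2], hMT'⟩
    obtain ⟨M', hM', hcard⟩ := ih hT' hM₁ hM₁T
    exact ⟨M', hM', by omega⟩

section VertexCover

variable {C : Finset V}

lemma IsVertexCover.sum_degree_compl_eq (hC : H.IsVertexCover ↑C) :
    ∑ v ∈ Cᶜ, H.degree v = ∑ c ∈ C, #(Cᶜ.filter (H.Adj c)) := by
  have hnbr : ∀ v ∈ Cᶜ, H.degree v = #(C.bipartiteAbove H.Adj v) := by
    intro v hv
    rw [← card_neighborFinset_eq_degree, bipartiteAbove]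
    congr 1
    ext u
    rw [mem_neighborFinset, mem_filter, iff_and_self]
    intro huv
    exact (hC huv).resolve_left (by simpa using hv)
  rw [sum_congr rfl hnbr, sum_card_bipartiteAbove_eq_sum_card_bipartiteBelow]
  simp only [bipartiteBelow, H.adj_comm]

lemma IsVertexCover.card_edgeFinset_le_sum_degree (hC : H.IsVertexCover ↑C) :
    #H.edgeFinset ≤ ∑ c ∈ C, H.degree c := by
  have hcompl : ∑ v ∈ Cᶜ, H.degree v ≤ ∑ c ∈ C, H.degree c := by
    rw [hC.sum_degree_compl_eq]
    refine sum_le_sum fun c _ => ?_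
    rw [← card_neighborFinset_eq_degree]
    exact card_le_card fun u hu => by simpa using (mem_filter.1 hu).2
  have := H.sum_degrees_eq_twice_card_edges
  rw [← sum_add_sum_compl C] at this
  omega

lemma IsVertexCover.card_edgeFinset_le (hC : H.IsVertexCover ↑C) :
    #H.edgeFinset ≤ (#C).choose 2 + #C * (Fintype.card V - #C) := by
  have hcompl : ∑ v ∈ Cᶜ, H.degree v ≤ #C * (Fintype.card V - #C) := by
    rw [hC.sum_degree_compl_eq, ← card_compl]
    exact sum_le_card_nsmul _ _ _ fun c _ => card_filter_le _ _
  have hC' : ∑ c ∈ C, H.degree c ≤ #C * (Fintype.card V - 1) :=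
    sum_le_card_nsmul _ _ _ fun c _ => Nat.le_sub_one_of_lt (H.degree_lt_card_verts c)
  have hsum := H.sum_degrees_eq_twice_card_edges
  rw [← sum_add_sum_compl C] at hsum
  obtain ⟨d, hd⟩ := Nat.exists_eq_add_of_le (card_le_univ C)
  rw [hd, Nat.add_sub_cancel_left] at hcompl ⊢
  rw [hd] at hC'
  have hchoose : 2 * (#C).choose 2 = #C * (#C - 1) := by
    rw [Nat.choose_two_right, Nat.mul_div_cancel' (Nat.even_mul_pred_self _).two_dvd]
  have hsplit : #C * (#C + d - 1) = #C * (#C - 1) + #C * d := by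
    rcases Nat.eq_zero_or_pos #C with h | h
    · simp [h]
    · rw [show #C + d - 1 = #C - 1 + d by omega, mul_add]
  linarith

end VertexCover

theorem card_edgeFinset_le_of_forall_isPairMatching_card_le {j : ℕ}
    (hn : 5 * j ^ 2 < Fintype.card V) (hν : ∀ M, H.IsPairMatching M → #M ≤ j) :
    #H.edgeFinset ≤ j * (Fintype.card V - j) + j.choose 2 := by
  set n := Fintype.card V
  set S := univ.filter fun v => 2 * j + 1 ≤ H.degree v
  obtain ⟨M, ⟨hM, hMS⟩, hmax⟩ := Set.exists_max_image
    {M : Finset (V × V) | H.IsPairMatching M ∧ Disjoint (pairSupport M) S} card (Set.toFinite _)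
    ⟨∅, by simp [IsPairMatching], by simp [pairSupport]⟩
  have hcover := hM.isVertexCover_of_maximal hMS fun M' h₁ h₂ => hmax M' ⟨h₁, h₂⟩
  have hsmall : #M + #S ≤ j := by
    obtain ⟨M', hM', hcard⟩ :=
      hM.exists_card_ge_of_le_degree (T := S) (fun t ht => (mem_filter.1 ht).2) hMS
    have := hν M' hM'
    omega
  rcases (show #S = j ∨ #S < j by omega) with hS | hS
  · have hM0 : M = ∅ := card_eq_zero.1 (by omega)
    have := hcover.card_edgeFinset_le
    simp only [hM0, pairSupport, biUnion_empty, union_empty, hS] at this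
    rwa [add_comm] at this
  · have hlow : ∀ v ∈ pairSupport M, H.degree v ≤ 2 * j := fun v hv => by
      have := Finset.disjoint_left.1 hMS hv
      simp only [S, mem_filter, mem_univ, true_and, not_le] at this
      omega
    have hM2 := card_pairSupport_le M
    calc #H.edgeFinset ≤ ∑ v ∈ S ∪ pairSupport M, H.degree v :=
          hcover.card_edgeFinset_le_sum_degree
      _ = ∑ v ∈ S, H.degree v + ∑ v ∈ pairSupport M, H.degree v := sum_union hMS.symm
      _ ≤ #S * (n - 1) + #(pairSupport M) * (2 * j) := by
          gcongr
          · exact sum_le_card_nsmul _ _ _ fun v _ =>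
              Nat.le_sub_one_of_lt (H.degree_lt_card_verts v)
          · exact sum_le_card_nsmul _ _ _ hlow
      _ ≤ (j - 1) * (n - 1) + 2 * j * (2 * j) := by gcongr <;> omega
      _ ≤ j * (n - j) + j.choose 2 := by
          have := sub_one_mul_sub_one_add_le hn
          omega

end SimpleGraph

section Oriented

variable {V : Type*} {G : V → V → Prop} {k : ℕ}

lemma copies_orientedMatching_of_injective (tail head : Fin k → V)
    (harc : ∀ i, G (tail i) (head i)) (hinj : Function.Injective (Sum.elim tail head)) :
    Copies (orientedMatching k) G := by
  let slot : Fin (2 * k) → Fin k ⊕ Fin k := fun j =>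
    if (j : ℕ) % 2 = 0 then .inl ⟨j / 2, by omega⟩ else .inr ⟨j / 2, by omega⟩
  have hslot : Function.Injective slot := by
    intro j j' h
    simp only [slot] at h
    split_ifs at h <;> simp only [Sum.inl.injEq, Sum.inr.injEq, Fin.mk.injEq] at h
      <;> omega
  refine ⟨Sum.elim tail head ∘ slot, hinj.comp hslot, fun a b ⟨ha, hb⟩ => ?_⟩
  have hslot_a : slot a = .inl ⟨a / 2, by omega⟩ := if_pos ha
  have hslot_b : slot b = .inr ⟨a / 2, by omega⟩ := by
    simp only [slot, if_neg (show ¬ (b : ℕ) % 2 = 0 by omega)]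
    congr 2
    omega
  simpa [hslot_a, hslot_b] using harc _

open SimpleGraph in
lemma copies_orientedMatching_of_isPairMatching [DecidableEq V] {M : Finset (V × V)}
    (hM : (fromRel G).IsPairMatching M) (hk : #M = k) : Copies (orientedMatching k) G := by
  classical
  let e : Fin k → V × V := fun i => (M.equivFinOfCardEq hk).symm i
  have he : ∀ i, e i ∈ M := fun i => ((M.equivFinOfCardEq hk).symm i).2
  have he_inj : Function.Injective e := fun i i' h =>
    (M.equivFinOfCardEq hk).symm.injective (Subtype.ext h)
  let tail : Fin k → V := fun i => if G (e i).1 (e i).2 then (e i).1 else (e i).2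
  let head : Fin k → V := fun i => if G (e i).1 (e i).2 then (e i).2 else (e i).1
  have hadj : ∀ i, (fromRel G).Adj (e i).1 (e i).2 := fun i => hM.1 _ (he i)
  have harc : ∀ i, G (tail i) (head i) := fun i => by
    have := ((fromRel_adj _ _ _).1 (hadj i)).2
    simp only [tail, head]
    split_ifs with h
    · exact h
    · exact this.resolve_left h
  have htail : ∀ i, tail i = (e i).1 ∨ tail i = (e i).2 := fun i => by
    simp only [tail]; split_ifs <;> simp
  have hhead : ∀ i, head i = (e i).1 ∨ head i = (e i).2 := fun i => by
    simp only [head]; split_ifs <;> simp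
  have hne : ∀ i, tail i ≠ head i := fun i => by
    have := (hadj i).ne
    simp only [tail, head]
    split_ifs
    exacts [this, this.symm]
  have hsame : ∀ {i i' v},
      (v = (e i).1 ∨ v = (e i).2) → (v = (e i').1 ∨ v = (e i').2) → i = i' :=
    fun hv hv' => he_inj (hM.eq_of_mem (he _) (he _) hv hv')
  refine copies_orientedMatching_of_injective tail head harc ?_
  rintro (i | i) (i' | i') hxy <;> simp only [Sum.elim_inl, Sum.elim_inr] at hxy
  · rw [hsame (htail i) (hxy ▸ htail i')]
  · obtain rfl := hsame (htail i) (hxy ▸ hhead i')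
    exact absurd hxy (hne i)
  · obtain rfl := hsame (hhead i) (hxy ▸ htail i')
    exact absurd hxy.symm (hne i)
  · rw [hsame (hhead i) (hxy ▸ hhead i')]

open SimpleGraph in
lemma SimpleGraph.IsPairMatching.card_le_of_not_copies [DecidableEq V] {j : ℕ}
    {M : Finset (V × V)}
    (hfree : ¬ Copies (orientedMatching (j + 1)) G) (hM : (fromRel G).IsPairMatching M) :
    #M ≤ j := by
  by_contra! h
  obtain ⟨M', hM'M, hcard⟩ := exists_subset_card_eq (show j + 1 ≤ #M from h)
  exact hfree (copies_orientedMatching_of_isPairMatching (hM.subset hM'M) hcard)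

open SimpleGraph in
lemma ncard_eq_card_edgeFinset_fromRel [Fintype V] [DecidableRel (fromRel G).Adj]
    (hasym : ∀ u v, G u v → ¬ G v u) :
    {p : V × V | G p.1 p.2}.ncard = #(fromRel G).edgeFinset := by
  have hinj : Set.InjOn (fun p : V × V => s(p.1, p.2)) {p | G p.1 p.2} := by
    rintro p hp q hq hpq
    rcases Sym2.mk_eq_mk_iff.1 hpq with h | rfl
    · exact h
    · exact absurd hq (hasym _ _ hp)
  suffices h : (fun p : V × V => s(p.1, p.2)) '' {p | G p.1 p.2} = (fromRel G).edgeSet by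
    rw [← Set.ncard_coe_finset, coe_edgeFinset, ← h, hinj.ncard_image]
  ext e
  induction e using Sym2.ind with
  | h a b =>
    simp only [Set.mem_image, Set.mem_ofPred_eq, mem_edgeSet, fromRel_adj, Prod.exists]
    constructor
    · rintro ⟨c, d, hcd, h⟩
      rcases Sym2.eq_iff.1 h with ⟨rfl, rfl⟩ | ⟨rfl, rfl⟩
      · exact ⟨fun h => hasym _ _ hcd (h ▸ hcd), .inl hcd⟩
      · exact ⟨fun h => hasym _ _ hcd (h ▸ hcd), .inr hcd⟩
    · rintro ⟨-, h | h⟩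
      exacts [⟨a, b, h, rfl⟩, ⟨b, a, h, Sym2.eq_swap⟩]

lemma not_copies_orientedMatching_of_forall_mem {S : Finset V} (hS : #S < k)
    (hG : ∀ u v, G u v → u ∈ S) : ¬ Copies (orientedMatching k) G := by
  rintro ⟨f, hf, harc⟩
  have := card_le_card_of_injOn (s := (univ : Finset (Fin k))) (t := S)
    (fun i => f ⟨2 * i, by omega⟩)
    (fun i _ => hG _ _ (harc _ ⟨2 * i + 1, by omega⟩ ⟨by simp, rfl⟩))
    (fun i _ i' _ h => by simpa [Fin.ext_iff] using hf h)
  simp only [card_univ, Fintype.card_fin] at this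
  omega

lemma sum_range_sub_one_sub {n j : ℕ} (h : j ≤ n) :
    ∑ i ∈ range j, (n - 1 - i) = j * (n - j) + j.choose 2 := by
  induction j with
  | zero => simp
  | succ j ih =>
    rw [sum_range_succ, ih (by omega), Nat.choose_succ_succ', Nat.choose_one_right]
    obtain ⟨d, rfl⟩ := Nat.exists_eq_add_of_le h
    rw [show j + 1 + d - j = d + 1 by omega, show j + 1 + d - 1 - j = d by omega,
      show j + 1 + d - (j + 1) = d by omega]
    ring

def extremalOrientedGraph (n j : ℕ) (u v : Fin n) : Prop :=
  (u : ℕ) < j ∧ u < v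

lemma not_copies_extremalOrientedGraph {n j : ℕ} :
    ¬ Copies (orientedMatching (j + 1)) (extremalOrientedGraph n j) :=
  not_copies_orientedMatching_of_forall_mem (S := univ.filter fun u : Fin n => (u : ℕ) < j)
    ((card_le_card_of_injOn (t := range j) Fin.val
      (fun u hu => by simpa using (mem_filter.1 hu).2) Fin.val_injective.injOn).trans_lt
      (by simp))
    fun u v h => by simpa using h.1

lemma ncard_extremalOrientedGraph {n j : ℕ} (h : j ≤ n) :
    {p : Fin n × Fin n | extremalOrientedGraph n j p.1 p.2}.ncard = j * (n - j) + j.choose 2 := by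
  classical
  have hrow : ∀ u : Fin n, #(univ.filter fun v => extremalOrientedGraph n j u v) =
      if (u : ℕ) < j then n - 1 - u else 0 := fun u => by
    split_ifs with hu
    · simp [extremalOrientedGraph, hu, ← Fin.card_Ioi, Finset.filter_lt_eq_Ioi]
    · simp [extremalOrientedGraph, hu]
  rw [Set.ncard_eq_toFinset_card', Set.toFinset_ofPred, ← sum_range_sub_one_sub h, card_filter,
    Fintype.sum_prod_type]
  simp only [← card_filter, hrow]
  rw [Fin.sum_univ_eq_sum_range (fun i => if i < j then n - 1 - i else 0), ← sum_filter]
  congr 1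
  ext i
  simp only [mem_filter, mem_range]
  omega

end Oriented

/-- for `k ≥ 1` and sufficiently large `n`,
`exo(n, M_k) = (k-1)(n-k+1) + C(k-1, 2)`. -/
theorem stmt_10 (k : ℕ) (hk : 1 ≤ k) :
    ∃ N : ℕ, ∀ n ≥ N,
      exo n (orientedMatching k) = (k - 1) * (n - k + 1) + (k - 1).choose 2 := by
  obtain ⟨j, rfl⟩ : ∃ j, k = j + 1 := ⟨k - 1, by omega⟩
  refine ⟨5 * j ^ 2 + 1, fun n hn => ?_⟩
  have hjn : j < n := by nlinarith
  rw [Nat.add_sub_cancel, show n - (j + 1) + 1 = n - j by omega]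
  refine IsGreatest.csSup_eq ⟨⟨extremalOrientedGraph n j, fun v h => lt_irrefl v h.2,
    fun u v h h' => lt_asymm h.2 h'.2, not_copies_extremalOrientedGraph,
    ncard_extremalOrientedGraph hjn.le⟩, ?_⟩
  rintro _ ⟨G, -, hasym, hfree, rfl⟩
  classical
  rw [ncard_eq_card_edgeFinset_fromRel hasym]
  simpa using (SimpleGraph.fromRel G).card_edgeFinset_le_of_forall_isPairMatching_card_le
    (by simpa using hn) fun M hM => hM.card_le_of_not_copies hfree
end

section
/- Let F be the oriented graph on five vertices u, v, w, x, y consisting of an antidirected path on three vertices with arcs u→w and v→w, together with one additional vertex-disjoint arc x→y. Then there exists N such that for all n ≥ N, exo(n, F) = 2n − 3. -/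
/-- The oriented graph on five vertices `u = 0, v = 1, w = 2, x = 3, y = 4` with
arcs `u→w, v→w` (an antidirected `P₃`) and a vertex-disjoint arc `x→y`. -/
def antiP3plusArc (i j : Fin 5) : Prop :=
  (i = 0 ∧ j = 2) ∨ (i = 1 ∧ j = 2) ∨ (i = 3 ∧ j = 4)

/-! If `a → c` and `b → c` form an in-cherry of an `F`-free oriented graph, every arc meets
`{a, b, c}`, since otherwise the cherry and the arc form a copy of `F`. Consequently a vertex of
in-degree at least 4 meets every arc (some in-cherry at it avoids the arc), and two in-cherries
with distinct non-adjacent centres have the same leaves `a, b`, which then meet every arc.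
If all in-degrees are at most 3 and there are at least `2n - 2` arcs, at least `(n - 2) / 2`
vertices have in-degree at least 2; for `n ≥ 12` two of them lie outside a first in-cherry and
are therefore non-adjacent. Arcs met by two vertices number at most `2n - 3`, which is attained
when `a → b` and both `a` and `b` dominate all other vertices. -/

open Finset

variable {V : Type*}

def IsVertexCover (G : V → V → Prop) (s : Set V) : Prop :=
  ∀ x y, G x y → x ∈ s ∨ y ∈ s

theorem IsVertexCover.mono {G : V → V → Prop} {s t : Set V} (h : IsVertexCover G s)
    (hst : s ⊆ t) : IsVertexCover G t :=
  fun x y hxy => (h x y hxy).imp (@hst x) (@hst y)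

theorem ncard_arcs_eq_ncard_image_sym2 {G : V → V → Prop} (hasym : ∀ u v, G u v → ¬ G v u) :
    {p : V × V | G p.1 p.2}.ncard
      = ((fun p : V × V => s(p.1, p.2)) '' {p : V × V | G p.1 p.2}).ncard := by
  refine (Set.InjOn.ncard_image ?_).symm
  rintro ⟨x, y⟩ hxy ⟨x', y'⟩ hxy' h
  rw [Sym2.eq_iff] at h
  rcases h with ⟨rfl, rfl⟩ | ⟨rfl, rfl⟩
  · rfl
  · exact (hasym _ _ hxy hxy').elim

section Counting

variable [Fintype V] {G : V → V → Prop}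

theorem ncard_incidenceSet_top_union [DecidableEq V] {a b : V} (hab : a ≠ b) :
    ((⊤ : SimpleGraph V).incidenceSet a ∪ (⊤ : SimpleGraph V).incidenceSet b).ncard
      = 2 * Fintype.card V - 3 := by
  have hinter := Set.ncard_union_add_ncard_inter
    ((⊤ : SimpleGraph V).incidenceSet a) ((⊤ : SimpleGraph V).incidenceSet b)
  have hdeg (v : V) : ((⊤ : SimpleGraph V).incidenceSet v).ncard = Fintype.card V - 1 := by
    rw [Set.ncard_eq_toFinset_card', Set.toFinset_card, SimpleGraph.card_incidenceSet_eq_degree]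
    exact SimpleGraph.complete_graph_degree v
  have htwo : 2 ≤ Fintype.card V := Fintype.one_lt_card_iff.mpr ⟨a, b, hab⟩
  rw [(⊤ : SimpleGraph V).incidenceSet_inter_incidenceSet_of_adj hab, Set.ncard_singleton,
    hdeg, hdeg] at hinter
  omega

theorem ncard_arcs_le_of_isVertexCover_pair (hasym : ∀ u v, G u v → ¬ G v u) {a b : V}
    (hab : a ≠ b) (hcover : IsVertexCover G {a, b}) :
    {p : V × V | G p.1 p.2}.ncard ≤ 2 * Fintype.card V - 3 := by
  classical
  rw [ncard_arcs_eq_ncard_image_sym2 hasym, ← ncard_incidenceSet_top_union hab]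
  refine Set.ncard_le_ncard ?_
  rintro _ ⟨⟨x, y⟩, hxy, rfl⟩
  have hne : x ≠ y := fun h => hasym x x (h ▸ hxy) (h ▸ hxy)
  have := hcover x y hxy
  simp only [Set.mem_insert_iff, Set.mem_singleton_iff] at this
  simp only [SimpleGraph.incidenceSet, SimpleGraph.edgeSet_top, Set.mem_union, Set.mem_ofPred_eq,
    Set.mem_compl_iff, Sym2.mem_diagSet, Sym2.mk_isDiag_iff, Sym2.mem_iff, hne]
  tauto

end Counting

section InDegree

variable [Fintype V] (G : V → V → Prop) [DecidableRel G]

def inDeg (v : V) : ℕ := #{u | G u v}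

variable {G}

theorem ncard_arcs_eq_sum_inDeg : {p : V × V | G p.1 p.2}.ncard = ∑ v, inDeg G v := by
  rw [Set.ncard_eq_toFinset_card', Set.toFinset_ofPred, card_filter, Fintype.sum_prod_type_right]
  simp only [inDeg, card_filter]

theorem ncard_arcs_le_of_inDeg_le_three (h : ∀ v, inDeg G v ≤ 3) :
    {p : V × V | G p.1 p.2}.ncard ≤ Fintype.card V + 2 * #{v | 2 ≤ inDeg G v} := by
  rw [ncard_arcs_eq_sum_inDeg, card_filter, mul_sum, ← card_univ, card_eq_sum_ones,
    ← sum_add_distrib]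
  gcongr with v
  have := h v
  split_ifs <;> omega

theorem exists_inCherry_of_one_lt_inDeg {v : V} (h : 1 < inDeg G v) :
    ∃ a b, a ≠ b ∧ G a v ∧ G b v := by
  obtain ⟨a, ha, b, hb, hab⟩ := one_lt_card.mp h
  simp only [mem_filter, mem_univ, true_and] at ha hb
  exact ⟨a, b, hab, ha, hb⟩

end InDegree

section AntiP3plusArcFree

variable {G : V → V → Prop} (hirr : ∀ v, ¬ G v v) (hfree : ¬ Copies antiP3plusArc G)
include hirr hfree

theorem isVertexCover_of_inCherry {a b c : V} (hab : a ≠ b) (hac : G a c) (hbc : G b c) :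
    IsVertexCover G {a, b, c} := by
  intro x y hxy
  by_contra! h
  simp only [Set.mem_insert_iff, Set.mem_singleton_iff, not_or] at h
  have hac' : a ≠ c := fun h => hirr c (h ▸ hac)
  have hbc' : b ≠ c := fun h => hirr c (h ▸ hbc)
  have hxy' : x ≠ y := fun h => hirr y (h ▸ hxy)
  refine hfree ⟨![a, b, c, x, y], ?_, ?_⟩
  · rw [← List.nodup_ofFn]
    simp [*, Ne.symm]
  · rintro i j (⟨rfl, rfl⟩ | ⟨rfl, rfl⟩ | ⟨rfl, rfl⟩) <;> assumption

theorem isVertexCover_singleton_of_four_le_inDeg [Fintype V] [DecidableEq V] [DecidableRel G]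
    {c : V} (hc : 4 ≤ inDeg G c) : IsVertexCover G {c} := by
  intro x y hxy
  by_contra! h
  obtain ⟨a, ha, b, hb, hab⟩ := (one_lt_card (s := ({u | G u c} : Finset V) \ {x, y})).mp <| by
    have := le_card_sdiff {x, y} ({u | G u c} : Finset V)
    have := card_le_two (a := x) (b := y)
    unfold inDeg at hc
    omega
  simp only [mem_sdiff, mem_filter, mem_univ, true_and, mem_insert, mem_singleton] at ha hb
  have := isVertexCover_of_inCherry hirr hfree hab ha.1 hb.1 x y hxy
  simp only [Set.mem_insert_iff, Set.mem_singleton_iff] at h this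
  grind

theorem isVertexCover_pair_of_inCherries {a₁ b₁ c₁ a₂ b₂ c₂ : V}
    (hab₁ : a₁ ≠ b₁) (ha₁ : G a₁ c₁) (hb₁ : G b₁ c₁)
    (hab₂ : a₂ ≠ b₂) (ha₂ : G a₂ c₂) (hb₂ : G b₂ c₂)
    (hc : c₁ ≠ c₂) (h₁₂ : ¬ G c₁ c₂) (h₂₁ : ¬ G c₂ c₁) : IsVertexCover G {a₁, b₁} := by
  have hT₁ := isVertexCover_of_inCherry hirr hfree hab₁ ha₁ hb₁
  have hT₂ := isVertexCover_of_inCherry hirr hfree hab₂ ha₂ hb₂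
  have hleaf : ∀ a, G a c₁ → a = a₂ ∨ a = b₂ := by
    intro a ha
    have := hT₂ a c₁ ha
    simp only [Set.mem_insert_iff, Set.mem_singleton_iff] at this
    grind
  intro x y hxy
  have h₁ := hT₁ x y hxy
  have h₂ := hT₂ x y hxy
  have := hleaf a₁ ha₁
  have := hleaf b₁ hb₁
  simp only [Set.mem_insert_iff, Set.mem_singleton_iff] at h₁ h₂ ⊢
  grind

theorem exists_isVertexCover_pair [Fintype V] [DecidableEq V] [DecidableRel G]
    (hH : 5 ≤ #{v | 2 ≤ inDeg G v}) : ∃ a b, a ≠ b ∧ IsVertexCover G {a, b} := by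
  set H : Finset V := {v | 2 ≤ inDeg G v}
  have cherry (v : V) (hv : v ∈ H) : ∃ a b, a ≠ b ∧ G a v ∧ G b v :=
    exists_inCherry_of_one_lt_inDeg (mem_filter.mp hv).2
  obtain ⟨c, hc⟩ : H.Nonempty := card_pos.mp (by omega)
  obtain ⟨a, b, hab, hac, hbc⟩ := cherry c hc
  have hT := isVertexCover_of_inCherry hirr hfree hab hac hbc
  obtain ⟨c₁, hc₁, c₂, hc₂, hc₁₂⟩ := (one_lt_card (s := H \ {a, b, c})).mp <| by
    have := le_card_sdiff {a, b, c} H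
    have := card_le_three (a := a) (b := b) (c := c)
    omega
  rw [mem_sdiff] at hc₁ hc₂
  obtain ⟨a₁, b₁, hab₁, ha₁, hb₁⟩ := cherry c₁ hc₁.1
  obtain ⟨a₂, b₂, hab₂, ha₂, hb₂⟩ := cherry c₂ hc₂.1
  have hindep {x y : V} (hx : x ∉ ({a, b, c} : Finset V)) (hy : y ∉ ({a, b, c} : Finset V)) :
      ¬ G x y := fun h => by
    have := hT x y h
    simp_all
  exact ⟨a₁, b₁, hab₁, isVertexCover_pair_of_inCherries hirr hfree hab₁ ha₁ hb₁ hab₂ ha₂ hb₂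
    hc₁₂ (hindep hc₁.2 hc₂.2) (hindep hc₂.2 hc₁.2)⟩

end AntiP3plusArcFree

theorem ncard_arcs_le_of_antiP3plusArc_free [Fintype V] {G : V → V → Prop}
    (hn : 12 ≤ Fintype.card V) (hasym : ∀ u v, G u v → ¬ G v u)
    (hfree : ¬ Copies antiP3plusArc G) :
    {p : V × V | G p.1 p.2}.ncard ≤ 2 * Fintype.card V - 3 := by
  classical
  have hirr (v : V) : ¬ G v v := fun h => hasym v v h h
  by_cases hdeg : ∃ c, 4 ≤ inDeg G c
  · obtain ⟨c, hc⟩ := hdeg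
    have : Nontrivial V := Fintype.one_lt_card_iff_nontrivial.mp (by omega)
    obtain ⟨b, hbc⟩ := exists_ne c
    refine ncard_arcs_le_of_isVertexCover_pair hasym hbc.symm ?_
    exact (isVertexCover_singleton_of_four_le_inDeg hirr hfree hc).mono (by simp)
  · simp only [not_exists, not_le] at hdeg
    by_contra! hlt
    have := ncard_arcs_le_of_inDeg_le_three fun v => Nat.le_of_lt_succ (hdeg v)
    obtain ⟨a, b, hab, hcover⟩ := exists_isVertexCover_pair hirr hfree (by omega)
    exact hlt.not_ge (ncard_arcs_le_of_isVertexCover_pair hasym hab hcover)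

def twoDominators (a b : V) (i j : V) : Prop :=
  (i = a ∧ j = b) ∨ ((i = a ∨ i = b) ∧ j ≠ a ∧ j ≠ b)

theorem not_copies_antiP3plusArc_of_tails {G : V → V → Prop} {a b : V}
    (htail : ∀ x y, G x y → x = a ∨ x = b) : ¬ Copies antiP3plusArc G := by
  rintro ⟨f, hf, hmap⟩
  have h₀ := htail _ _ (hmap 0 2 (by simp [antiP3plusArc]))
  have h₁ := htail _ _ (hmap 1 2 (by simp [antiP3plusArc]))
  have h₃ := htail _ _ (hmap 3 4 (by simp [antiP3plusArc]))
  have h₀₁ : f 0 ≠ f 1 := hf.ne (by decide)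
  have h₀₃ : f 0 ≠ f 3 := hf.ne (by decide)
  have h₁₃ : f 1 ≠ f 3 := hf.ne (by decide)
  grind

theorem ncard_arcs_twoDominators [Fintype V] [DecidableEq V] {a b : V} (hab : a ≠ b) :
    {p : V × V | twoDominators a b p.1 p.2}.ncard = 2 * Fintype.card V - 3 := by
  have hset : {p : V × V | twoDominators a b p.1 p.2}
      = ↑(insert (a, b) (({a, b} : Finset V) ×ˢ ({a, b} : Finset V)ᶜ)) := by
    ext ⟨i, j⟩
    simp only [twoDominators, Set.mem_ofPred_eq, coe_insert, coe_product, coe_compl, coe_singleton,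
      Set.mem_insert_iff, Set.mem_singleton_iff, Set.mem_prod, Set.mem_compl_iff, Prod.mk.injEq]
    tauto
  have hpair : #({a, b} : Finset V) = 2 := card_pair hab
  have := card_le_univ ({a, b} : Finset V)
  rw [hset, Set.ncard_coe_finset, card_insert_of_notMem (by simp), card_product, card_compl,
    hpair]
  omega

theorem exo_eq {α : Type*} {F : α → α → Prop} {n m : ℕ}
    (hle : ∀ G : Fin n → Fin n → Prop, (∀ u v, G u v → ¬ G v u) → ¬ Copies F G →
      {p : Fin n × Fin n | G p.1 p.2}.ncard ≤ m)
    (hex : ∃ G : Fin n → Fin n → Prop, (∀ v, ¬ G v v) ∧ (∀ u v, G u v → ¬ G v u) ∧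
      ¬ Copies F G ∧ {p : Fin n × Fin n | G p.1 p.2}.ncard = m) :
    exo n F = m :=
  IsGreatest.csSup_eq ⟨hex, fun _ ⟨G, _, hasym, hfree, hcard⟩ => hcard ▸ hle G hasym hfree⟩

theorem exists_antiP3plusArc_free_card_arcs_eq [Fintype V] [DecidableEq V]
    (hV : 1 < Fintype.card V) :
    ∃ G : V → V → Prop, (∀ v, ¬ G v v) ∧ (∀ u v, G u v → ¬ G v u) ∧
      ¬ Copies antiP3plusArc G ∧ {p : V × V | G p.1 p.2}.ncard = 2 * Fintype.card V - 3 := by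
  obtain ⟨a, b, hab⟩ := Fintype.one_lt_card_iff.mp hV
  refine ⟨twoDominators a b, ?_, ?_, ?_, ncard_arcs_twoDominators hab⟩
  · grind [twoDominators]
  · grind [twoDominators]
  · exact not_copies_antiP3plusArc_of_tails (a := a) (b := b) fun x y h => by grind [twoDominators]

/-- for sufficiently large `n`, `exo(n, F) = 2n - 3`. -/
theorem stmt_12 : ∃ N : ℕ, ∀ n ≥ N, exo n antiP3plusArc = 2 * n - 3 := by
  refine ⟨12, fun n hn => exo_eq (fun G hasym hfree => ?_) ?_⟩
  · simpa using ncard_arcs_le_of_antiP3plusArc_free (by simpa using hn) hasym hfree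
  · simpa using exists_antiP3plusArc_free_card_arcs_eq (V := Fin n)
      (by rw [Fintype.card_fin]; omega)
end

section
/- For every oriented graph G on n vertices there exists a partition of its vertex set into two sets X and Y with ||X| − |Y|| ≤ 1 such that the number of arcs of G directed from X to Y is at least |E(G)|/4, where |E(G)| is the total number of arcs of G. (Equivalently, G has a spanning bipartite subdigraph H = H(X ∪ Y, X → Y) with |E(H)| ≥ |E(G)|/4 and ||X| − |Y|| ≤ 1.) -/
open Finset

lemma aux_count {V : Type*} [Fintype V] [DecidableEq V] {u v : V} (huv : u ≠ v)
    {k : ℕ} (hk : 1 ≤ k) :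
    ((Finset.powersetCard k (Finset.univ : Finset V)).filter
      (fun S => u ∈ S ∧ v ∉ S)).card = (Fintype.card V - 2).choose (k - 1) := by
  have hu' : u ∈ (Finset.univ : Finset V).erase v := by
    simp [Finset.mem_erase, huv]
  have key : ((Finset.powersetCard k (Finset.univ : Finset V)).filter
      (fun S => u ∈ S ∧ v ∉ S)).card
      = (Finset.powersetCard (k-1) (((Finset.univ : Finset V).erase v).erase u)).card := by
    refine Finset.card_bij' (fun S _ => S.erase u) (fun T _ => insert u T) ?hi ?hj ?li ?ri
    case hi =>
      intro S hS
      simp only [Finset.mem_filter, Finset.mem_powersetCard] at hS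
      obtain ⟨⟨hsub, hcard⟩, hu, hv⟩ := hS
      rw [Finset.mem_powersetCard]
      constructor
      · intro x hx
        rw [Finset.mem_erase] at hx ⊢
        refine ⟨hx.1, Finset.mem_erase.mpr ⟨?_, Finset.mem_univ x⟩⟩
        rintro rfl; exact hv hx.2
      · rw [Finset.card_erase_of_mem hu, hcard]
    case hj =>
      intro T hT
      rw [Finset.mem_powersetCard] at hT
      obtain ⟨hsub, hcard⟩ := hT
      have hu : u ∉ T := fun h => (Finset.mem_erase.mp (hsub h)).1 rfl
      simp only [Finset.mem_filter, Finset.mem_powersetCard]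
      refine ⟨⟨Finset.subset_univ _, ?_⟩, Finset.mem_insert_self _ _, ?_⟩
      · rw [Finset.card_insert_of_notMem hu, hcard]; omega
      · intro hvmem
        rcases Finset.mem_insert.mp hvmem with h | h
        · exact huv h.symm
        · exact (Finset.mem_erase.mp (Finset.mem_erase.mp (hsub h)).2).1 rfl
    case li =>
      intro S hS
      simp only [Finset.mem_filter] at hS
      exact Finset.insert_erase hS.2.1
    case ri =>
      intro T hT
      rw [Finset.mem_powersetCard] at hT
      have hu : u ∉ T := fun h => (Finset.mem_erase.mp (hT.1 h)).1 rfl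
      exact Finset.erase_insert hu
  rw [key, Finset.card_powersetCard, Finset.card_erase_of_mem hu',
    Finset.card_erase_of_mem (Finset.mem_univ v), Finset.card_univ]
  have h2 : Fintype.card V - 1 - 1 = Fintype.card V - 2 := by omega
  rw [h2]

lemma aux_choose (m j : ℕ) (hj : j = m / 2) :
    (m + 2).choose (j + 1) ≤ 4 * m.choose j := by
  have hjm : j ≤ m := by omega
  have id1 : (m + 2) * (m + 1).choose j = (m + 2).choose (j + 1) * (j + 1) :=
    Nat.add_one_mul_choose_eq (m + 1) j
  have id2 : (m + 1).choose j = (m + 1).choose (m + 1 - j) :=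
    (Nat.choose_symm (by omega)).symm
  have id3 : (m + 1) * m.choose (m - j) = (m + 1).choose (m + 1 - j) * (m + 1 - j) := by
    have h := Nat.add_one_mul_choose_eq m (m - j)
    have h1 : m - j + 1 = m + 1 - j := by omega
    rwa [h1] at h
  have id4 : m.choose (m - j) = m.choose j := Nat.choose_symm hjm
  have key : (j + 1) * (m + 1 - j) * (m + 2).choose (j + 1)
      = (m + 2) * (m + 1) * m.choose j := by
    calc (j + 1) * (m + 1 - j) * (m + 2).choose (j + 1)
        = (m + 1 - j) * ((m + 2).choose (j + 1) * (j + 1)) := by ring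
      _ = (m + 1 - j) * ((m + 2) * (m + 1).choose j) := by rw [id1]
      _ = (m + 2) * ((m + 1).choose (m + 1 - j) * (m + 1 - j)) := by rw [id2]; ring
      _ = (m + 2) * ((m + 1) * m.choose (m - j)) := by rw [id3]
      _ = (m + 2) * (m + 1) * m.choose j := by rw [id4]; ring
  have hineq : (m + 2) * (m + 1) ≤ 4 * ((j + 1) * (m + 1 - j)) := by
    obtain ⟨t, rfl | rfl⟩ := Nat.even_or_odd' m
    · have ht : j = t := by omega
      rw [ht, show 2 * t + 1 - t = t + 1 from by omega]; nlinarith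
    · have ht : j = t := by omega
      rw [ht, show 2 * t + 1 + 1 - t = t + 2 from by omega]; nlinarith
  have hpos : 0 < (m + 2) * (m + 1) := by positivity
  have hfin : (m + 2) * (m + 1) * (m + 2).choose (j + 1)
      ≤ (m + 2) * (m + 1) * (4 * m.choose j) := by
    calc (m + 2) * (m + 1) * (m + 2).choose (j + 1)
        ≤ 4 * ((j + 1) * (m + 1 - j)) * (m + 2).choose (j + 1) :=
          Nat.mul_le_mul_right _ hineq
      _ = 4 * ((j + 1) * (m + 1 - j) * (m + 2).choose (j + 1)) := by ring
      _ = 4 * ((m + 2) * (m + 1) * m.choose j) := by rw [key]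
      _ = (m + 2) * (m + 1) * (4 * m.choose j) := by ring
  exact Nat.le_of_mul_le_mul_left hfin hpos

/-- every oriented graph `G` admits a partition of its vertex set into
two sets `X`, `Y` with `||X| - |Y|| ≤ 1` such that at least a quarter of the arcs of
`G` are directed from `X` to `Y`. -/
theorem stmt_18 {V : Type*} [Fintype V] (G : V → V → Prop)
    (hirr : ∀ v, ¬ G v v) (hasym : ∀ u v, G u v → ¬ G v u) :
    ∃ X Y : Set V, (∀ v, v ∈ X ∨ v ∈ Y) ∧ X ∩ Y = ∅ ∧
      |(X.ncard : ℤ) - (Y.ncard : ℤ)| ≤ 1 ∧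
      ({p : V × V | G p.1 p.2}.ncard : ℝ) / 4 ≤
        ({p : V × V | p.1 ∈ X ∧ p.2 ∈ Y ∧ G p.1 p.2}.ncard : ℝ) := by
  classical
  set n := Fintype.card V with hn
  set A : Finset (V × V) := Finset.univ.filter (fun p => G p.1 p.2) with hA
  have hAcoe : {p : V × V | G p.1 p.2} = ↑A := by
    ext p; simp [hA]
  set m := A.card with hm
  by_cases hn1 : n ≤ 1
  · -- trivial case: at most one vertex, hence no arcs
    refine ⟨Set.univ, ∅, fun v => Or.inl (Set.mem_univ v), Set.inter_empty _, ?_, ?_⟩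
    · rw [Set.ncard_univ, Set.ncard_empty]
      have hcn : Nat.card V = n := by rw [hn, Nat.card_eq_fintype_card]
      rw [hcn]
      simp only [Nat.cast_zero, sub_zero]
      rw [abs_le]
      constructor <;> omega
    · have hempty : {p : V × V | G p.1 p.2} = ∅ := by
        ext p
        simp only [Set.mem_setOf_eq, Set.mem_empty_iff_false, iff_false]
        intro hG
        have hne : p.1 ≠ p.2 := fun h => hirr p.1 (h ▸ hG)
        have : Fintype.card V ≤ 1 := hn1
        exact hne (Fintype.card_le_one_iff.mp this p.1 p.2)
      rw [hempty]
      simp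
  · push_neg at hn1
    set k := n / 2 with hk
    have hk1 : 1 ≤ k := by omega
    set 𝒮 := Finset.powersetCard k (Finset.univ : Finset V) with h𝒮
    set C := (n - 2).choose (k - 1) with hC
    -- the double counting identity
    have hsum : ∑ S ∈ 𝒮, ((A.filter (fun p => p.1 ∈ S ∧ p.2 ∉ S)).card
        + (A.filter (fun p => p.1 ∉ S ∧ p.2 ∈ S)).card) = m * (2 * C) := by
      have hrw : ∀ S : Finset V,
          (A.filter (fun p => p.1 ∈ S ∧ p.2 ∉ S)).card
            + (A.filter (fun p => p.1 ∉ S ∧ p.2 ∈ S)).card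
          = ∑ p ∈ A, ((if p.1 ∈ S ∧ p.2 ∉ S then 1 else 0)
              + (if p.1 ∉ S ∧ p.2 ∈ S then 1 else 0)) := by
        intro S
        rw [Finset.card_filter, Finset.card_filter, ← Finset.sum_add_distrib]
      simp only [hrw]
      rw [Finset.sum_comm]
      have hpt : ∀ p ∈ A, ∑ S ∈ 𝒮, ((if p.1 ∈ S ∧ p.2 ∉ S then (1:ℕ) else 0)
          + (if p.1 ∉ S ∧ p.2 ∈ S then 1 else 0)) = 2 * C := by
        intro p hp
        have hG : G p.1 p.2 := by
          simp only [hA, Finset.mem_filter] at hp; exact hp.2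
        have hne : p.1 ≠ p.2 := fun h => hirr p.1 (h ▸ hG)
        rw [Finset.sum_add_distrib]
        have e1 : ∑ S ∈ 𝒮, (if p.1 ∈ S ∧ p.2 ∉ S then (1:ℕ) else 0)
            = (𝒮.filter (fun S => p.1 ∈ S ∧ p.2 ∉ S)).card := by
          rw [Finset.card_filter]
        have e2 : ∑ S ∈ 𝒮, (if p.1 ∉ S ∧ p.2 ∈ S then (1:ℕ) else 0)
            = (𝒮.filter (fun S => p.2 ∈ S ∧ p.1 ∉ S)).card := by
          rw [Finset.card_filter]
          exact Finset.sum_congr rfl (fun S _ => by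
            by_cases h1 : p.1 ∈ S <;> by_cases h2 : p.2 ∈ S <;> simp [h1, h2])
        rw [e1, e2, h𝒮, aux_count hne hk1, aux_count hne.symm hk1]
        ring
      rw [Finset.sum_congr rfl hpt, Finset.sum_const, smul_eq_mul, ← hm]
    -- 𝒮 is nonempty
    have h𝒮ne : 𝒮.Nonempty := by
      rw [h𝒮]
      apply Finset.powersetCard_nonempty.mpr
      rw [Finset.card_univ, ← hn]; omega
    -- averaging
    have havg : ∃ S ∈ 𝒮, m * (2 * C) ≤ 𝒮.card *
        ((A.filter (fun p => p.1 ∈ S ∧ p.2 ∉ S)).card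
          + (A.filter (fun p => p.1 ∉ S ∧ p.2 ∈ S)).card) := by
      apply Finset.exists_le_of_sum_le h𝒮ne
      rw [Finset.sum_const, smul_eq_mul, ← Finset.mul_sum, hsum]
    obtain ⟨S, hS𝒮, hSavg⟩ := havg
    -- binomial facts
    have hcard𝒮 : 𝒮.card = n.choose k := by
      rw [h𝒮, Finset.card_powersetCard, Finset.card_univ, ← hn]
    have hchoose : n.choose k ≤ 4 * C := by
      have h2 : n = (n - 2) + 2 := by omega
      have h3 : k = (k - 1) + 1 := by omega
      rw [hC, h2, h3]
      apply aux_choose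
      omega
    have hCpos : 0 < C := by
      rw [hC]
      apply Nat.choose_pos
      omega
    set c1 := (A.filter (fun p => p.1 ∈ S ∧ p.2 ∉ S)).card with hc1
    set c2 := (A.filter (fun p => p.1 ∉ S ∧ p.2 ∈ S)).card with hc2
    have hkey : m ≤ 2 * (c1 + c2) := by
      have h1 : m * (2 * C) ≤ (4 * C) * (c1 + c2) := by
        calc m * (2 * C) ≤ 𝒮.card * (c1 + c2) := hSavg
          _ = n.choose k * (c1 + c2) := by rw [hcard𝒮]
          _ ≤ (4 * C) * (c1 + c2) := Nat.mul_le_mul_right _ hchoose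
      have h2 : C * (m * 2) ≤ C * (4 * (c1 + c2)) := by
        calc C * (m * 2) = m * (2 * C) := by ring
          _ ≤ (4 * C) * (c1 + c2) := h1
          _ = C * (4 * (c1 + c2)) := by ring
      have := Nat.le_of_mul_le_mul_left h2 hCpos
      omega
    -- choose the better direction
    have hSc : S.card = k := (Finset.mem_powersetCard.mp hS𝒮).2
    have hScc : Sᶜ.card = n - k := by
      have := Finset.card_compl S
      rw [hSc] at this; rw [this, hn]
    have main : ∃ T : Finset V, (T.card = k ∨ T.card = n - k) ∧
        m ≤ 4 * (A.filter (fun p => p.1 ∈ T ∧ p.2 ∉ T)).card := by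
      rcases le_total c2 c1 with h | h
      · exact ⟨S, Or.inl hSc, by omega⟩
      · refine ⟨Sᶜ, Or.inr hScc, ?_⟩
        have heq : (A.filter (fun p => p.1 ∈ Sᶜ ∧ p.2 ∉ Sᶜ)).card = c2 := by
          rw [hc2]
          congr 1
          apply Finset.filter_congr
          intro p _
          simp [Finset.mem_compl]
        rw [heq]; omega
    obtain ⟨T, hTcard, hTle⟩ := main
    refine ⟨↑T, ↑Tᶜ, ?_, ?_, ?_, ?_⟩
    · intro v
      simp [Finset.mem_compl]
      tauto
    · ext v; simp
    · rw [Set.ncard_coe_finset, Set.ncard_coe_finset]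
      have h1 := Finset.card_compl T
      rw [← hn] at h1
      have h2 : T.card ≤ n := by rw [← Finset.card_univ, ← hn] at *; exact Finset.card_le_card (Finset.subset_univ T)
      rw [h1]
      rcases hTcard with h | h <;> rw [h] <;> push_cast <;>
        rw [Nat.cast_sub (by omega)] <;> push_cast <;>
        rw [abs_le] <;> constructor <;> omega
    · have hset : {p : V × V | p.1 ∈ (↑T : Set V) ∧ p.2 ∈ (↑Tᶜ : Set V) ∧ G p.1 p.2}
          = ↑(A.filter (fun p => p.1 ∈ T ∧ p.2 ∉ T)) := by
        ext p
        simp only [Set.mem_setOf_eq, Finset.coe_filter, Finset.mem_coe,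
          Finset.mem_compl, hA, Finset.mem_filter, Finset.mem_univ, true_and,
          Set.mem_setOf_eq]
        tauto
      rw [hAcoe, hset, Set.ncard_coe_finset, Set.ncard_coe_finset, ← hm]
      rw [div_le_iff₀ (by norm_num : (0:ℝ) < 4)]
      have : (m : ℝ) ≤ 4 * ((A.filter (fun p => p.1 ∈ T ∧ p.2 ∉ T)).card : ℝ) := by
        exact_mod_cast hTle
      linarith
end
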